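/- arXiv:1201.5859 — 8 statements merged into one kernel-verified Lean document; each statement's English description precedes it below -/
import Mathlib

section
/- Let V ⊆ M = ℤ^n be a submodule with property 𝔓: for each x ∈ V, every element of V_x is a finite sum (with repetition allowed) of units lying in V_x. Let v₀ ∈ V have no coordinate equal to 0, and fix i with e_i ∉ V; set W = V ⊕ ℤe_i. Then W also has property 𝔓. -/
/-- A *unit* of `ι → ℤ`: all coordinates lie in `{-1, 0, 1}`. -/
def IsUnitVec {ι : Type*} (u : ι → ℤ) : Prop := ∀ i, u i = -1 ∨ u i = 0 ∨ u i = 1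

/-- `cone V v` is `V_v = V ∩ ⨁ ε_i(v)·ℕ·e_i`: the elements of `V` whose `i`-th coordinate is a
non-negative multiple of `sign (v i)` for every `i`. -/
def cone {ι : Type*} (V : Submodule ℤ (ι → ℤ)) (v : ι → ℤ) : Set (ι → ℤ) :=
  {x | x ∈ V ∧ ∀ i, ∃ k : ℕ, x i = (k : ℤ) * Int.sign (v i)}

/-- Property `𝔓`: for each `x ∈ V`, every element of `V_x` is a finite sum (with repetitions
allowed) of units lying in `V_x`. -/
def HasP {ι : Type*} (V : Submodule ℤ (ι → ℤ)) : Prop :=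
  ∀ x ∈ V, ∀ y ∈ cone V x, ∃ l : Multiset (ι → ℤ),
    (∀ u ∈ l, IsUnitVec u ∧ u ∈ cone V x) ∧ l.sum = y

lemma sign_cases (b : ℤ) : b.sign = -1 ∨ b.sign = 0 ∨ b.sign = 1 := by
  rcases lt_trichotomy b 0 with h|h|h
  · exact Or.inl (Int.sign_eq_neg_one_iff_neg.mpr h)
  · exact Or.inr (Or.inl (by simp [h]))
  · exact Or.inr (Or.inr (Int.sign_eq_one_iff_pos.mpr h))

lemma aux_sign (a b u : ℤ) (k : ℕ) (h1 : u = (k : ℤ) * a.sign) (m : ℕ)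
    (h2 : a = (m : ℤ) * b.sign) : ∃ k' : ℕ, u = (k' : ℤ) * b.sign := by
  by_cases ha : a = 0
  · refine ⟨0, ?_⟩
    simp [ha] at h1
    simp [h1]
  · have hs : a.sign = b.sign := by
      rcases sign_cases b with hb|hb|hb <;> rw [hb] at h2 ⊢
      · have : a < 0 := by
          rcases Nat.eq_zero_or_pos m with hm|hm
          · exfalso; apply ha; omega
          · omega
        exact Int.sign_eq_neg_one_iff_neg.mpr this
      · exact absurd (by omega) ha
      · have : 0 < a := by
          rcases Nat.eq_zero_or_pos m with hm|hm
          · exfalso; apply ha; omega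
          · omega
        exact Int.sign_eq_one_iff_pos.mpr this
    exact ⟨k, by rw [h1, hs]⟩

/-- If `V ⊆ ℤ^n` has property `𝔓`, `v₀ ∈ V` has no zero coordinate, and `e_i ∉ V`, then
`W = V ⊕ ℤ·e_i` also has property `𝔓`. -/
theorem stmt1 {n : ℕ} (V : Submodule ℤ (Fin n → ℤ)) (hP : HasP V)
    (v₀ : Fin n → ℤ) (hv₀ : v₀ ∈ V) (hnz : ∀ i, v₀ i ≠ 0)
    (i : Fin n) (hi : Pi.single i (1 : ℤ) ∉ V) :
    HasP (V ⊔ Submodule.span ℤ {Pi.single i (1 : ℤ)}) := by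
  set W := V ⊔ Submodule.span ℤ {Pi.single i (1 : ℤ)} with hW
  intro x hx y hy
  obtain ⟨hyW, hysign⟩ := hy
  rw [hW, Submodule.mem_sup] at hyW
  obtain ⟨v, hv, z, hz, hvz⟩ := hyW
  rw [Submodule.mem_span_singleton] at hz
  obtain ⟨c, rfl⟩ := hz
  have hyj : ∀ j, j ≠ i → y j = v j := by
    intro j hj
    rw [← hvz]
    simp [Pi.single_apply, hj]
  -- single lemma: Pi.single i t = t • Pi.single i 1
  have hsingle : ∀ t : ℤ, (Pi.single i t : Fin n → ℤ) = t • (Pi.single i (1 : ℤ) : Fin n → ℤ) := by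
    intro t; funext j; by_cases h : j = i <;> simp [Pi.single_apply, h]
  have hsingleW : ∀ t : ℤ, Pi.single i t ∈ W := by
    intro t
    rw [hsingle t]
    exact Submodule.mem_sup_right (Submodule.smul_mem _ _ (Submodule.mem_span_singleton_self _))
  obtain ⟨l₀, hl₀, hsum⟩ := hP v hv v ⟨hv, fun j => ⟨(v j).natAbs, by
    rw [mul_comm]; exact (Int.sign_mul_natAbs (v j)).symm⟩⟩
  classical
  refine ⟨l₀.map (fun u : Fin n → ℤ => u - Pi.single i (u i)) +
      Multiset.replicate (y i).natAbs (Pi.single i (Int.sign (x i))), ?_, ?_⟩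
  · intro u hu
    rw [Multiset.mem_add] at hu
    rcases hu with hu | hu
    · obtain ⟨u₀, hu₀, rfl⟩ := Multiset.mem_map.mp hu
      obtain ⟨hunit, hu₀V, hu₀sign⟩ := hl₀ u₀ hu₀
      refine ⟨?_, ?_, ?_⟩
      · intro j
        by_cases hj : j = i
        · subst hj; right; left; simp [Pi.single_apply]
        · simpa [Pi.single_apply, hj] using hunit j
      · exact Submodule.sub_mem _ (Submodule.mem_sup_left hu₀V) (hsingleW _)
      · intro j
        by_cases hj : j = i
        · subst hj; exact ⟨0, by simp [Pi.single_apply]⟩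
        · obtain ⟨k, hk⟩ := hu₀sign j
          obtain ⟨m, hm⟩ := hysign j
          obtain ⟨k', hk'⟩ := aux_sign (v j) (x j) (u₀ j) k hk m (by rw [← hyj j hj]; exact hm)
          exact ⟨k', by simpa [Pi.single_apply, hj] using hk'⟩
    · obtain ⟨hne, rfl⟩ := Multiset.mem_replicate.mp hu
      refine ⟨?_, hsingleW _, ?_⟩
      · intro j
        by_cases hj : j = i
        · subst hj
          simpa [Pi.single_apply] using sign_cases (x j)
        · right; left; simp [Pi.single_apply, hj]
      · intro j
        by_cases hj : j = i
        · subst hj; exact ⟨1, by simp [Pi.single_apply]⟩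
        · exact ⟨0, by simp [Pi.single_apply, hj]⟩
  · funext j
    rw [Multiset.sum_add]
    by_cases hj : j = i
    · subst hj
      have h1 : (l₀.map (fun u : Fin n → ℤ => u - (Pi.single j (u j) : Fin n → ℤ))).sum j
          = (0 : ℤ) := by
        rw [Pi.multiset_sum_apply]
        simp [Pi.single_apply]
      have h2 : (Multiset.replicate (y j).natAbs
            ((Pi.single j (Int.sign (x j))) : Fin n → ℤ)).sum j
          = ((y j).natAbs : ℤ) * Int.sign (x j) := by
        rw [Multiset.sum_replicate]
        simp [Pi.single_apply]
      rw [Pi.add_apply, h1, h2, zero_add]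
      obtain ⟨m, hm⟩ := hysign j
      clear h1 h2
      rcases sign_cases (x j) with h|h|h <;> rw [h] at hm ⊢ <;> omega
    · have h1 : (l₀.map (fun u : Fin n → ℤ => u - (Pi.single i (u i) : Fin n → ℤ))).sum j
          = v j := by
        rw [Pi.multiset_sum_apply]
        simp only [Multiset.map_map, Function.comp]
        simp only [Pi.sub_apply, Pi.single_apply, if_neg hj, sub_zero]
        rw [← Pi.multiset_sum_apply]
        rw [hsum]
      rw [Pi.add_apply, h1]
      rw [Multiset.sum_replicate]
      simp [Pi.single_apply, hj, (hyj j hj).symm]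
end

section
/- Let V ⊆ M = ℤ^n be a submodule with property 𝔓, and let v₀ ∈ V have no coordinate equal to 0. Then any group homomorphism φ : V → ℤ with φ(V_{v₀}) ⊆ ℕ extends to a group homomorphism Φ : M → ℤ with Φ(M_{v₀}) ⊆ ℕ. -/
private lemma sign_sq {m : ℤ} (h : m ≠ 0) : Int.sign m * Int.sign m = 1 := by
  rcases lt_trichotomy m 0 with h'|h'|h'
  · simp [Int.sign_eq_neg_one_of_neg h']
  · exact absurd h' h
  · simp [Int.sign_eq_one_of_pos h']

private lemma self_cone {ι : Type*} {V : Submodule ℤ (ι → ℤ)} {x : ι → ℤ} (hx : x ∈ V) :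
    x ∈ cone V x :=
  ⟨hx, fun i => ⟨(x i).natAbs, by rw [mul_comm, Int.sign_mul_natAbs]⟩⟩

private lemma msum_apply_zero {n : ℕ} (l : Multiset (Fin n → ℤ)) (j : Fin n)
    (h : ∀ u ∈ l, u j = 0) : l.sum j = 0 := by
  induction l using Multiset.induction with
  | empty => simp
  | cons u t ih => simp_all [Multiset.sum_cons]

private lemma sign_eq_of {a b : ℤ} {ky : ℕ} (hb : b = (ky : ℤ) * Int.sign a) (hb0 : b ≠ 0) :
    Int.sign b = Int.sign a := by
  rcases lt_trichotomy a 0 with h'|h'|h'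
  · rw [Int.sign_eq_neg_one_of_neg h'] at hb ⊢
    have : 0 < (ky:ℤ) := by omega
    rw [Int.sign_eq_neg_one_of_neg (by omega)]
  · simp [h', Int.sign_zero] at hb; exact absurd hb hb0
  · rw [Int.sign_eq_one_of_pos h'] at hb ⊢
    have : 0 < (ky:ℤ) := by omega
    rw [Int.sign_eq_one_of_pos (by omega)]

theorem key : ∀ (n : ℕ) (V : Submodule ℤ (Fin n → ℤ)), HasP V → ∀ (v₀ : Fin n → ℤ), v₀ ∈ V →
    (∀ i, v₀ i ≠ 0) → ∀ (φ : V →+ ℤ), (∀ x : V, (x : Fin n → ℤ) ∈ cone V v₀ → 0 ≤ φ x) →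
    ∃ c : Fin n → ℤ, (∀ i, 0 ≤ c i * Int.sign (v₀ i)) ∧
      ∀ x : V, (∑ i, c i * (x : Fin n → ℤ) i) = φ x := by
  intro n
  induction n with
  | zero =>
    intro V hP v₀ hv₀ hnz φ hφ
    refine ⟨0, fun i => i.elim0, fun x => ?_⟩
    have hx : x = 0 := Subtype.ext (funext fun i => i.elim0)
    rw [hx, map_zero]
    simp
  | succ n ih =>
    intro V hP v₀ hv₀ hnz φ hφ
    set s : ℤ := Int.sign (v₀ (Fin.last n)) with hs
    have hss : s * s = 1 := sign_sq (hnz _)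
    have hsne : s ≠ 0 := by rw [hs]; simpa using (hnz (Fin.last n))
    have hv₀c : v₀ ∈ cone V v₀ := self_cone hv₀
    set T : Set ℕ := {k | ∃ x : V, (x : Fin (n+1) → ℤ) ∈ cone V v₀ ∧
        (x : Fin (n+1) → ℤ) (Fin.last n) ≠ 0 ∧ (k : ℤ) = φ x} with hT
    have hTne : T.Nonempty :=
      ⟨(φ ⟨v₀, hv₀⟩).toNat, ⟨v₀, hv₀⟩, hv₀c, hnz _,
        Int.toNat_of_nonneg (hφ _ hv₀c)⟩
    set m₀ : ℕ := sInf T with hm₀def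
    obtain ⟨ystar, hyc, hyj, hym⟩ : m₀ ∈ T := Nat.sInf_mem hTne
    have hmin : ∀ x : V, (x : Fin (n+1) → ℤ) ∈ cone V v₀ →
        (x : Fin (n+1) → ℤ) (Fin.last n) ≠ 0 → (m₀ : ℤ) ≤ φ x := by
      intro x hxc hxj
      have h1 : (φ x).toNat ∈ T := ⟨x, hxc, hxj, Int.toNat_of_nonneg (hφ x hxc)⟩
      have h2 := Nat.sInf_le h1
      have h3 := hφ x hxc
      omega
    -- bound for a single unit in the cone
    have hunitb : ∀ u : Fin (n+1) → ℤ, IsUnitVec u → u ∈ cone V v₀ →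
        ∃ hu : u ∈ V, (m₀ : ℤ) * (s * u (Fin.last n)) ≤ φ ⟨u, hu⟩ := by
      intro u hunit huc
      obtain ⟨huV, hcoord⟩ := huc
      obtain ⟨k, hk⟩ := hcoord (Fin.last n)
      have hsu : s * u (Fin.last n) = (k : ℤ) := by
        rw [hk, ← hs]
        calc s * ((k:ℤ) * s) = (k:ℤ) * (s * s) := by ring
        _ = k := by rw [hss, mul_one]
      refine ⟨huV, ?_⟩
      rcases Nat.eq_zero_or_pos k with hk0 | hkpos
      · rw [hsu, hk0]
        simpa using hφ ⟨u, huV⟩ ⟨huV, hcoord⟩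
      · have hk1 : (k : ℤ) = 1 := by
          have hu1 := hunit (Fin.last n)
          have hs1 : s = 1 ∨ s = -1 := by
            rcases lt_trichotomy (v₀ (Fin.last n)) 0 with h'|h'|h'
            · right; rw [hs]; exact Int.sign_eq_neg_one_of_neg h'
            · exact absurd h' (hnz _)
            · left; rw [hs]; exact Int.sign_eq_one_of_pos h'
          rcases hs1 with h|h <;> rw [h] at hsu <;>
            rcases hu1 with h2|h2|h2 <;> rw [h2] at hsu <;> omega
        have huj : u (Fin.last n) ≠ 0 := by
          intro h0; rw [h0, mul_zero] at hsu; omega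
        have := hmin ⟨u, huV⟩ ⟨huV, hcoord⟩ huj
        rw [hsu, hk1, mul_one]
        exact this
    -- multiset version
    have aux : ∀ l : Multiset (Fin (n+1) → ℤ), (∀ u ∈ l, IsUnitVec u ∧ u ∈ cone V v₀) →
        ∃ h : l.sum ∈ V, (m₀ : ℤ) * (s * l.sum (Fin.last n)) ≤ φ ⟨l.sum, h⟩ := by
      intro l
      induction l using Multiset.induction with
      | empty =>
        intro _
        refine ⟨by simpa using V.zero_mem, ?_⟩
        have h0 : (⟨(0 : Multiset (Fin (n+1) → ℤ)).sum, by simpa using V.zero_mem⟩ : V) = 0 :=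
          Subtype.ext (by simp)
        rw [h0, map_zero]
        simp
      | cons u t iht =>
        intro hul
        obtain ⟨htV, hts⟩ := iht (fun w hw => hul w (Multiset.mem_cons_of_mem hw))
        obtain ⟨hunit, huc⟩ := hul u (Multiset.mem_cons_self u t)
        obtain ⟨huV, hub⟩ := hunitb u hunit huc
        have hsumV : (u ::ₘ t).sum ∈ V := by
          rw [Multiset.sum_cons]; exact V.add_mem huV htV
        refine ⟨hsumV, ?_⟩
        have he : (⟨(u ::ₘ t).sum, hsumV⟩ : V) = ⟨u, huV⟩ + ⟨t.sum, htV⟩ :=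
          Subtype.ext (by simp [Multiset.sum_cons])
        rw [he, map_add]
        have hsj : (u ::ₘ t).sum (Fin.last n) = u (Fin.last n) + t.sum (Fin.last n) := by
          rw [Multiset.sum_cons]; rfl
        rw [hsj]
        have hexp : (m₀:ℤ) * (s * (u (Fin.last n) + t.sum (Fin.last n)))
            = (m₀:ℤ) * (s * u (Fin.last n)) + (m₀:ℤ) * (s * t.sum (Fin.last n)) := by ring
        rw [hexp]
        exact add_le_add hub hts
    have A1 : ∀ x : V, (x : Fin (n+1) → ℤ) ∈ cone V v₀ →
        (m₀ : ℤ) * (s * (x : Fin (n+1) → ℤ) (Fin.last n)) ≤ φ x := by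
      intro x hxc
      obtain ⟨l, hl, hsum⟩ := hP v₀ hv₀ x hxc
      obtain ⟨hV', hle⟩ := aux l hl
      have h1 : φ (⟨l.sum, hV'⟩ : V) = φ x := congrArg φ (Subtype.ext hsum)
      have h2 : l.sum (Fin.last n) = (x : Fin (n+1) → ℤ) (Fin.last n) := by rw [hsum]
      rw [h1, h2] at hle
      exact hle
    -- Claim A : partial cone condition suffices
    have A : ∀ x : V, (∀ i : Fin n, ∃ k : ℕ, (x : Fin (n+1) → ℤ) i.castSucc
          = (k : ℤ) * Int.sign (v₀ i.castSucc)) →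
        (m₀ : ℤ) * (s * (x : Fin (n+1) → ℤ) (Fin.last n)) ≤ φ x := by
      intro x hxc
      rcases le_or_gt 0 (s * (x : Fin (n+1) → ℤ) (Fin.last n)) with ht | ht
      · refine A1 x ⟨x.2, fun i => ?_⟩
        refine Fin.lastCases ?_ (fun i' => hxc i') i
        refine ⟨(s * (x : Fin (n+1) → ℤ) (Fin.last n)).toNat, ?_⟩
        rw [Int.toNat_of_nonneg ht, ← hs]
        linear_combination (-((x : Fin (n+1) → ℤ) (Fin.last n))) * hss
      · obtain ⟨t, htdef⟩ : ∃ t, t = s * (x : Fin (n+1) → ℤ) (Fin.last n) := ⟨_, rfl⟩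
        rw [← htdef] at ht
        obtain ⟨z, hzdef⟩ : ∃ z : V, z = x + (-t) • ystar := ⟨_, rfl⟩
        have hzapp : ∀ i, (z : Fin (n+1) → ℤ) i
            = (x : Fin (n+1) → ℤ) i + (-t) * (ystar : Fin (n+1) → ℤ) i := by
          intro i; rw [hzdef]; simp
        obtain ⟨k₂, hk₂⟩ := hyc.2 (Fin.last n)
        have hk₂pos : 1 ≤ (k₂ : ℤ) := by
          rcases Nat.eq_zero_or_pos k₂ with h0 | h1
          · exfalso; apply hyj; rw [hk₂, h0]; simp
          · exact_mod_cast h1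
        have hsy : s * (ystar : Fin (n+1) → ℤ) (Fin.last n) = (k₂ : ℤ) := by
          rw [hk₂, ← hs]
          calc s * ((k₂:ℤ) * s) = (k₂:ℤ) * (s * s) := by ring
            _ = k₂ := by rw [hss, mul_one]
        have hzlast : s * (z : Fin (n+1) → ℤ) (Fin.last n) = t + (-t) * (k₂ : ℤ) := by
          rw [hzapp]
          linear_combination (-t) * hsy - htdef
        have hzlnn : 0 ≤ s * (z : Fin (n+1) → ℤ) (Fin.last n) := by
          rw [hzlast]
          nlinarith [mul_nonneg (by linarith : (0:ℤ) ≤ -t) (by linarith : (0:ℤ) ≤ (k₂:ℤ) - 1)]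
        have hzc : (z : Fin (n+1) → ℤ) ∈ cone V v₀ := by
          refine ⟨z.2, fun i => ?_⟩
          refine Fin.lastCases ?_ (fun i' => ?_) i
          · refine ⟨(s * (z : Fin (n+1) → ℤ) (Fin.last n)).toNat, ?_⟩
            rw [Int.toNat_of_nonneg hzlnn, ← hs]
            linear_combination (-((z : Fin (n+1) → ℤ) (Fin.last n))) * hss
          · obtain ⟨k₁, hk₁⟩ := hxc i'
            obtain ⟨k₃, hk₃⟩ := hyc.2 i'.castSucc
            refine ⟨k₁ + t.natAbs * k₃, ?_⟩
            have hnat : ((t.natAbs : ℤ)) = -t := by omega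
            rw [Nat.cast_add, Nat.cast_mul, hnat, hzapp, hk₁, hk₃]
            ring
        have hz1 := A1 z hzc
        have hφz : φ z = φ x + (-t) * φ ystar := by
          rw [hzdef, map_add]
          congr 1
          have h := map_smul φ.toIntLinearMap (-t) ystar
          simpa using h
        have h6 : φ x = φ z + t * (m₀:ℤ) := by
          rw [hφz, ← hym]; ring
        rw [← htdef, h6]
        have h5 : 0 ≤ (m₀:ℤ) * (s * (z : Fin (n+1) → ℤ) (Fin.last n)) :=
          mul_nonneg (Int.ofNat_nonneg m₀) hzlnn
        linarith [le_trans h5 hz1]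
    -- well-definedness datum
    have hgl : ∀ d : V, (∀ i : Fin n, (d : Fin (n+1) → ℤ) i.castSucc = 0) →
        φ d = (m₀ : ℤ) * (s * (d : Fin (n+1) → ℤ) (Fin.last n)) := by
      intro d hd0
      by_cases hdj : (d : Fin (n+1) → ℤ) (Fin.last n) = 0
      · have hd : d = 0 := Subtype.ext (funext fun i => Fin.lastCases hdj hd0 i)
        rw [hd]; simp
      · obtain ⟨l, hl, hsum⟩ := hP d d.2 d (self_cone d.2)
        have hex : ∃ u ∈ l, u (Fin.last n) ≠ 0 := by
          by_contra hall
          push_neg at hall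
          exact hdj (hsum ▸ msum_apply_zero l _ hall)
        obtain ⟨u, hul, huj⟩ := hex
        obtain ⟨hunit, huV, hucoord⟩ := hl u hul
        have hu0 : ∀ i : Fin n, u i.castSucc = 0 := by
          intro i
          obtain ⟨ku, hku⟩ := hucoord i.castSucc
          rw [hku, hd0 i, Int.sign_zero, mul_zero]
        have huj1 : u (Fin.last n) = 1 ∨ u (Fin.last n) = -1 := by
          rcases hunit (Fin.last n) with h|h|h
          · right; exact h
          · exact absurd h huj
          · left; exact h
        obtain ⟨g, hgdef⟩ : ∃ g : V, g = (s * u (Fin.last n)) • (⟨u, huV⟩ : V) := ⟨_, rfl⟩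
        have hgapp : ∀ i, (g : Fin (n+1) → ℤ) i = (s * u (Fin.last n)) * u i := by
          intro i; rw [hgdef]; simp
        have hgci : ∀ i : Fin n, (g : Fin (n+1) → ℤ) i.castSucc = 0 := by
          intro i; rw [hgapp, hu0 i, mul_zero]
        have hglast : (g : Fin (n+1) → ℤ) (Fin.last n) = s := by
          rw [hgapp]
          rcases huj1 with h|h <;> rw [h] <;> ring
        have hgc : (g : Fin (n+1) → ℤ) ∈ cone V v₀ := by
          refine ⟨g.2, fun i => ?_⟩
          refine Fin.lastCases ?_ (fun i' => ?_) i
          · exact ⟨1, by rw [hglast, ← hs]; ring⟩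
          · exact ⟨0, by rw [hgci i']; simp⟩
        have hgne : (g : Fin (n+1) → ℤ) (Fin.last n) ≠ 0 := by rw [hglast]; exact hsne
        have hg1 : (m₀:ℤ) ≤ φ g := hmin g hgc hgne
        have hwc : ((ystar - g : V) : Fin (n+1) → ℤ) ∈ cone V v₀ := by
          refine ⟨(ystar - g).2, fun i => ?_⟩
          refine Fin.lastCases ?_ (fun i' => ?_) i
          · obtain ⟨k₂, hk₂⟩ := hyc.2 (Fin.last n)
            have hk₂pos : 1 ≤ k₂ := by
              rcases Nat.eq_zero_or_pos k₂ with h0|h1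
              · exfalso; apply hyj; rw [hk₂, h0]; simp
              · exact h1
            refine ⟨k₂ - 1, ?_⟩
            have hcoe : ((ystar - g : V) : Fin (n+1) → ℤ) (Fin.last n)
                = (ystar : Fin (n+1) → ℤ) (Fin.last n) - (g : Fin (n+1) → ℤ) (Fin.last n) := by
              simp
            rw [hcoe, hk₂, hglast, ← hs]
            have hc2 : ((k₂ - 1 : ℕ) : ℤ) = (k₂:ℤ) - 1 := by omega
            rw [hc2]; ring
          · obtain ⟨k₃, hk₃⟩ := hyc.2 i'.castSucc
            refine ⟨k₃, ?_⟩
            have hcoe : ((ystar - g : V) : Fin (n+1) → ℤ) i'.castSucc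
                = (ystar : Fin (n+1) → ℤ) i'.castSucc - (g : Fin (n+1) → ℤ) i'.castSucc := by
              simp
            rw [hcoe, hk₃, hgci i']; ring
        have hg2 : φ g ≤ (m₀:ℤ) := by
          have h := hφ _ hwc
          rw [map_sub] at h
          linarith [hym]
        have hgval : φ g = (m₀:ℤ) := le_antisymm hg2 hg1
        have hdg : d = (s * (d : Fin (n+1) → ℤ) (Fin.last n)) • g := by
          refine Subtype.ext (funext fun i => ?_)
          have hcoe : (((s * (d : Fin (n+1) → ℤ) (Fin.last n)) • g : V) : Fin (n+1) → ℤ) i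
              = (s * (d : Fin (n+1) → ℤ) (Fin.last n)) * (g : Fin (n+1) → ℤ) i := by
            simp
          rw [hcoe]
          refine Fin.lastCases ?_ (fun i' => ?_) i
          · rw [hglast]
            linear_combination (-((d : Fin (n+1) → ℤ) (Fin.last n))) * hss
          · rw [hgci i', hd0 i', mul_zero]
        calc φ d = φ ((s * (d : Fin (n+1) → ℤ) (Fin.last n)) • g) := by rw [← hdg]
          _ = (s * (d : Fin (n+1) → ℤ) (Fin.last n)) * φ g := by
              have h := map_smul φ.toIntLinearMap (s * (d : Fin (n+1) → ℤ) (Fin.last n)) g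
              simpa using h
          _ = (m₀:ℤ) * (s * (d : Fin (n+1) → ℤ) (Fin.last n)) := by rw [hgval]; ring
    -- projection dropping the last coordinate
    obtain ⟨π, hπapp⟩ : ∃ π : (Fin (n+1) → ℤ) →ₗ[ℤ] (Fin n → ℤ),
        ∀ (y : Fin (n+1) → ℤ) (i : Fin n), π y i = y i.castSucc :=
      ⟨LinearMap.funLeft ℤ ℤ Fin.castSucc, fun _ _ => rfl⟩
    obtain ⟨V', hV'⟩ : ∃ V' : Submodule ℤ (Fin n → ℤ), V' = V.map π := ⟨_, rfl⟩
    have hP' : HasP V' := by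
      intro x' hx' y' hy'
      obtain ⟨hy'V, hy'c⟩ := hy'
      rw [hV'] at hy'V
      obtain ⟨y, hyV, hyπ⟩ := hy'V
      obtain ⟨l, hl, hsum⟩ := hP y hyV y (self_cone hyV)
      refine ⟨l.map π, ?_, ?_⟩
      · intro u' hu'
        obtain ⟨u, hul, rfl⟩ := Multiset.mem_map.mp hu'
        obtain ⟨hunit, huV, hucoord⟩ := hl u hul
        constructor
        · intro i
          rw [hπapp]
          exact hunit i.castSucc
        · refine ⟨by rw [hV']; exact Submodule.mem_map_of_mem huV, fun i => ?_⟩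
          rw [hπapp]
          obtain ⟨ku, hku⟩ := hucoord i.castSucc
          by_cases hyi : y i.castSucc = 0
          · refine ⟨0, ?_⟩
            rw [hku, hyi, Int.sign_zero, mul_zero]
            simp
          · obtain ⟨ky, hky⟩ := hy'c i
            rw [← hyπ, hπapp] at hky
            have hsgn : Int.sign (y i.castSucc) = Int.sign (x' i) := sign_eq_of hky hyi
            exact ⟨ku, by rw [hku, hsgn]⟩
      · rw [← hyπ, ← hsum]
        exact (map_multiset_sum π l).symm
    have hv₀' : π v₀ ∈ V' := by rw [hV']; exact Submodule.mem_map_of_mem hv₀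
    have hnz' : ∀ i, π v₀ i ≠ 0 := by
      intro i; rw [hπapp]; exact hnz i.castSucc
    -- lifting
    have hliftex : ∀ x' : V', ∃ y : V, π (y : Fin (n+1) → ℤ) = (x' : Fin n → ℤ) := by
      intro x'
      have h : (x' : Fin n → ℤ) ∈ V.map π := by rw [← hV']; exact x'.2
      obtain ⟨y, hyV, hyπ⟩ := h
      exact ⟨⟨y, hyV⟩, hyπ⟩
    choose lift hlift using hliftex
    obtain ⟨f, hfdef⟩ : ∃ f : V' → ℤ, f = fun x' =>
        φ (lift x') - (m₀:ℤ) * (s * ((lift x' : Fin (n+1) → ℤ)) (Fin.last n)) := ⟨_, rfl⟩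
    have hfspec : ∀ (x' : V') (y : V), π (y : Fin (n+1) → ℤ) = (x' : Fin n → ℤ) →
        f x' = φ y - (m₀:ℤ) * (s * ((y : Fin (n+1) → ℤ)) (Fin.last n)) := by
      intro x' y hy
      have hd : ∀ i : Fin n, ((lift x' - y : V) : Fin (n+1) → ℤ) i.castSucc = 0 := by
        intro i
        have h1 : π ((lift x' : V) : Fin (n+1) → ℤ) = π (y : Fin (n+1) → ℤ) := by
          rw [hlift, hy]
        have h2 := congrFun h1 i
        rw [hπapp, hπapp] at h2
        have hcoe : ((lift x' - y : V) : Fin (n+1) → ℤ) i.castSucc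
            = ((lift x' : V) : Fin (n+1) → ℤ) i.castSucc - (y : Fin (n+1) → ℤ) i.castSucc := by
          simp
        rw [hcoe, h2, sub_self]
      have h3 := hgl (lift x' - y) hd
      rw [map_sub] at h3
      have hj' : ((lift x' - y : V) : Fin (n+1) → ℤ) (Fin.last n)
          = ((lift x' : V) : Fin (n+1) → ℤ) (Fin.last n) - (y : Fin (n+1) → ℤ) (Fin.last n) := by
        simp
      rw [hj'] at h3
      rw [hfdef]
      linear_combination h3
    obtain ⟨φ'', hφ''def⟩ : ∃ φ'' : V' →+ ℤ, ∀ x', φ'' x' = f x' := by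
      refine ⟨{ toFun := f, map_zero' := ?_, map_add' := ?_ }, fun _ => rfl⟩
      · have h := hfspec 0 0 (by simp)
        simpa using h
      · intro a b
        show f (a + b) = f a + f b
        have hab : π ((lift a + lift b : V) : Fin (n+1) → ℤ) = ((a + b : V') : Fin n → ℤ) := by
          have : ((lift a + lift b : V) : Fin (n+1) → ℤ)
              = ((lift a : V) : Fin (n+1) → ℤ) + ((lift b : V) : Fin (n+1) → ℤ) := by simp
          rw [this, map_add, hlift a, hlift b]
          simp
        have h3 := hfspec (a+b) (lift a + lift b) hab
        have h4 : ((lift a + lift b : V) : Fin (n+1) → ℤ) (Fin.last n)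
            = ((lift a : V) : Fin (n+1) → ℤ) (Fin.last n)
              + ((lift b : V) : Fin (n+1) → ℤ) (Fin.last n) := by simp
        rw [h3, map_add, h4, hfdef]
        ring
    have hφ''pos : ∀ x' : V', (x' : Fin n → ℤ) ∈ cone V' (π v₀) → 0 ≤ φ'' x' := by
      intro x' hx'c
      have h2 : ∀ i : Fin n, ∃ k : ℕ, ((lift x' : V) : Fin (n+1) → ℤ) i.castSucc
          = (k:ℤ) * Int.sign (v₀ i.castSucc) := by
        intro i
        obtain ⟨k, hk⟩ := hx'c.2 i
        refine ⟨k, ?_⟩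
        have h5 := congrFun (hlift x') i
        rw [hπapp] at h5
        rw [h5, hk, hπapp]
      have h6 := A (lift x') h2
      rw [hφ''def, hfspec x' (lift x') (hlift x')]
      linarith
    obtain ⟨c', hc's, hc'sum⟩ := ih V' hP' (π v₀) hv₀' hnz' φ'' hφ''pos
    refine ⟨Fin.snoc c' ((m₀:ℤ) * s), ?_, ?_⟩
    · intro i
      refine Fin.lastCases ?_ (fun i' => ?_) i
      · rw [Fin.snoc_last, ← hs, mul_assoc, hss, mul_one]
        exact Int.ofNat_nonneg m₀
      · rw [Fin.snoc_castSucc]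
        have h7 := hc's i'
        rw [hπapp] at h7
        exact h7
    · intro x
      have hx' : π (x : Fin (n+1) → ℤ) ∈ V' := by
        rw [hV']; exact Submodule.mem_map_of_mem x.2
      have h1 := hc'sum ⟨π (x : Fin (n+1) → ℤ), hx'⟩
      have h2 := hfspec ⟨π (x : Fin (n+1) → ℤ), hx'⟩ x rfl
      rw [Fin.sum_univ_castSucc]
      have h3 : ∀ i : Fin n, (Fin.snoc c' ((m₀:ℤ)*s) : Fin (n+1) → ℤ) (Fin.castSucc i)
            * (x : Fin (n+1) → ℤ) (Fin.castSucc i)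
          = c' i * ((⟨π (x : Fin (n+1) → ℤ), hx'⟩ : V') : Fin n → ℤ) i := by
        intro i
        rw [Fin.snoc_castSucc]
        exact congrArg (c' i * ·) (hπapp (↑x) i).symm
      rw [Finset.sum_congr rfl (fun i _ => h3 i), h1, hφ''def, h2, Fin.snoc_last]
      ring


/-- Extension lemma: if `V ⊆ ℤ^n` has property `𝔓` and `v₀ ∈ V` has no zero coordinate, then any
homomorphism `φ : V → ℤ` with `φ(V_{v₀}) ⊆ ℕ` extends to `Φ : ℤ^n → ℤ` with `Φ(M_{v₀}) ⊆ ℕ`. -/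
theorem stmt2 {n : ℕ} (V : Submodule ℤ (Fin n → ℤ)) (hP : HasP V)
    (v₀ : Fin n → ℤ) (hv₀ : v₀ ∈ V) (hnz : ∀ i, v₀ i ≠ 0)
    (φ : V →+ ℤ) (hφ : ∀ x : V, (x : Fin n → ℤ) ∈ cone V v₀ → 0 ≤ φ x) :
    ∃ Φ : (Fin n → ℤ) →+ ℤ, (∀ x : V, Φ x = φ x) ∧
      ∀ y : Fin n → ℤ, (∀ i, ∃ k : ℕ, y i = (k : ℤ) * Int.sign (v₀ i)) → 0 ≤ Φ y := by
  obtain ⟨c, hcs, hcsum⟩ := key n V hP v₀ hv₀ hnz φ hφ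
  refine ⟨{ toFun := fun y => ∑ i, c i * y i,
            map_zero' := by simp,
            map_add' := by
              intro a b
              simp [mul_add, Finset.sum_add_distrib] }, fun x => hcsum x, ?_⟩
  intro y hy
  show 0 ≤ ∑ i, c i * y i
  refine Finset.sum_nonneg fun i _ => ?_
  obtain ⟨k, hk⟩ := hy i
  have h1 : c i * y i = (c i * Int.sign (v₀ i)) * (k : ℤ) := by rw [hk]; ring
  rw [h1]
  exact mul_nonneg (hcs i) (Int.ofNat_nonneg k)
end

section
/- Let v₀ = (1,1,…,1) ∈ ℤ^n and let V ⊆ ℤ^n be a submodule with property 𝔓. If φ : V → ℤ is a group homomorphism that is non-negative on V ∩ ℕ^n, then φ extends to a homomorphism Φ : ℤ^n → ℤ that is non-negative on ℕ^n; equivalently, there exist non-negative integers c_1,…,c_n with φ(x) = ∑_i c_i x_i for all x ∈ V. -/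
/-!
Adjoin the coordinate vectors `e_j` to `V` one at a time and extend `φ` along the way, keeping
it non-negative on `ℕ^n`: a Hahn–Banach argument over `ℤ`. Extending `Φ` from `W` to
`W + ℤ e_j` amounts to choosing an integer `t = Φ(e_j) ≥ 0` with `t x_j ≤ Φ x` for all `x ∈ W`
that are non-negative off `j`. If every such `x` is a sum of units of `W` that are non-negative
off `j`, it suffices to check this on units, where `x_j ∈ {-1, 0, 1}`: finitely many compatible
integer constraints.

This unit decomposition follows from `𝔓` and is inherited by `W + ℤ e_j` if signs are left free
at `j` in `W`: write `v = w + m e_j`, decompose `w`, erase the `j`-th coordinate of each unit and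
add `|v_j|` copies of `sign(v_j) e_j`.
-/

open Submodule

variable {ι : Type*}

theorem Int.exists_nonneg_between {A B : Set ℤ} (hA : A.Finite) (hAB : ∀ a ∈ A, ∀ b ∈ B, a ≤ b)
    (hB : ∀ b ∈ B, 0 ≤ b) : ∃ t : ℤ, 0 ≤ t ∧ (∀ a ∈ A, a ≤ t) ∧ ∀ b ∈ B, t ≤ b := by
  classical
  refine ⟨(insert 0 hA.toFinset).max' (Finset.insert_nonempty _ _),
    Finset.le_max' _ _ (Finset.mem_insert_self _ _),
    fun a ha => Finset.le_max' _ _ (by simp [ha]), fun b hb => Finset.max'_le _ _ _ ?_⟩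
  simpa using ⟨hB b hb, fun a ha => hAB a ha b hb⟩

theorem finite_setOf_isUnitVec [Finite ι] : {u : ι → ℤ | IsUnitVec u}.Finite :=
  (Set.Finite.pi fun _ => Set.toFinite ({-1, 0, 1} : Set ℤ)).subset fun _ hu i _ => hu i

theorem isUnitVec_sign_smul_single [DecidableEq ι] (a : ℤ) (j : ι) :
    IsUnitVec (a.sign • Pi.single j 1 : ι → ℤ) := by
  intro i
  rcases eq_or_ne i j with rfl | hij
  · rcases lt_trichotomy a 0 with h | rfl | h <;>
      simp [Int.sign_eq_neg_one_of_neg, Int.sign_eq_one_of_pos, *]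
  · simp [hij]

theorem mem_cone_self {V : Submodule ℤ (ι → ℤ)} {v : ι → ℤ} (hv : v ∈ V) : v ∈ cone V v :=
  ⟨hv, fun i => ⟨(v i).natAbs, by rw [mul_comm, Int.sign_mul_natAbs]⟩⟩

def unitsOff (W : Submodule ℤ (ι → ℤ)) (T : Set ι) : Set (ι → ℤ) :=
  {u | IsUnitVec u ∧ u ∈ W ∧ ∀ i ∉ T, 0 ≤ u i}

/-- A weakening of `𝔓` in which only the signs outside `T` are prescribed. -/
def IsUnitGeneratedOff (W : Submodule ℤ (ι → ℤ)) (T : Set ι) : Prop :=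
  ∀ v ∈ W, (∀ i ∉ T, 0 ≤ v i) → v ∈ AddSubmonoid.closure (unitsOff W T)

theorem HasP.isUnitGeneratedOff {V : Submodule ℤ (ι → ℤ)} (hP : HasP V) (T : Set ι) :
    IsUnitGeneratedOff V T := by
  intro v hv hvT
  obtain ⟨l, hl, rfl⟩ := hP v hv v (mem_cone_self hv)
  refine AddSubmonoid.multiset_sum_mem _ l fun u hu => AddSubmonoid.subset_closure ?_
  obtain ⟨hunit, huV, hsign⟩ := hl u hu
  refine ⟨hunit, huV, fun i hi => ?_⟩
  obtain ⟨k, hk⟩ := hsign i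
  rw [hk]
  exact mul_nonneg k.cast_nonneg (Int.sign_nonneg_iff.2 (hvT i hi))

section Decidable

variable [DecidableEq ι]

def eraseCoord (j : ι) : (ι → ℤ) →+ (ι → ℤ) :=
  AddMonoidHom.id _ - (AddMonoidHom.single _ j).comp (Pi.evalAddMonoidHom _ j)

theorem eraseCoord_apply (j : ι) (u : ι → ℤ) : eraseCoord j u = u - Pi.single j (u j) := rfl

theorem isUnitVec_eraseCoord {u : ι → ℤ} (hu : IsUnitVec u) (j : ι) :
    IsUnitVec (eraseCoord j u) := by
  intro i
  rcases eq_or_ne i j with rfl | hij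
  · simp [eraseCoord_apply]
  · simpa [eraseCoord_apply, hij] using hu i

theorem IsUnitGeneratedOff.sup_span_single {W : Submodule ℤ (ι → ℤ)} {j : ι} {T : Set ι}
    (hW : IsUnitGeneratedOff W (insert j T)) :
    IsUnitGeneratedOff (W ⊔ span ℤ {Pi.single j 1}) T := by
  set W' := W ⊔ span ℤ {Pi.single j 1}
  have hej : Pi.single j 1 ∈ W' := mem_sup_right (mem_span_singleton_self _)
  have herase : AddSubmonoid.closure (unitsOff W (insert j T)) ≤
      (AddSubmonoid.closure (unitsOff W' T)).comap (eraseCoord j) := by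
    refine AddSubmonoid.closure_le.2 fun u ⟨hunit, huW, hu⟩ => AddSubmonoid.subset_closure ?_
    refine ⟨isUnitVec_eraseCoord hunit j, ?_, fun i hi => ?_⟩
    · rw [eraseCoord_apply, ← mul_one (u j), ← smul_eq_mul, Pi.single_smul']
      exact sub_mem (mem_sup_left huW) (smul_mem _ _ hej)
    · rcases eq_or_ne i j with rfl | hij
      · simp [eraseCoord_apply]
      · simpa [eraseCoord_apply, hij] using hu i (by simp [hij, hi])
  intro v hv hvT
  obtain ⟨w, hw, z, hz, rfl⟩ := mem_sup.1 hv
  obtain ⟨m, rfl⟩ := mem_span_singleton.1 hz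
  have hwT : ∀ i ∉ insert j T, 0 ≤ w i := fun i hi => by
    have hij : i ≠ j := fun h => hi (h ▸ Set.mem_insert i T)
    simpa [hij] using hvT i fun h => hi (Set.mem_insert_of_mem j h)
  have hsign : (w j + m).sign • Pi.single j 1 ∈ unitsOff W' T := by
    refine ⟨isUnitVec_sign_smul_single _ j, smul_mem _ _ hej, fun i hi => ?_⟩
    rcases eq_or_ne i j with rfl | hij
    · simpa [Int.sign_nonneg_iff] using hvT i hi
    · simp [hij]
  have hdecomp : w + m • Pi.single j 1 =
      eraseCoord j w + (w j + m).natAbs • ((w j + m).sign • Pi.single j 1) := by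
    ext i
    rcases eq_or_ne i j with rfl | hij
    · simp [eraseCoord_apply, ← mul_assoc, mul_comm _ (Int.sign _), Int.sign_mul_abs]
    · simp [eraseCoord_apply, hij]
  rw [hdecomp]
  exact add_mem (herase (hW w hw hwT)) (nsmul_mem (AddSubmonoid.subset_closure hsign) _)

theorem sup_span_image_insert (V : Submodule ℤ (ι → ℤ)) (j : ι) (S : Finset ι) :
    V ⊔ span ℤ ((fun j => Pi.single j 1) '' ↑(insert j S)) =
      V ⊔ span ℤ ((fun j => Pi.single j 1) '' ↑S) ⊔ span ℤ {Pi.single j 1} := by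
  rw [Finset.coe_insert, Set.image_insert_eq, span_insert, sup_left_comm, sup_comm]

theorem HasP.isUnitGeneratedOff_sup_span {V : Submodule ℤ (ι → ℤ)} (hP : HasP V)
    (S : Finset ι) (T : Set ι) :
    IsUnitGeneratedOff (V ⊔ span ℤ ((fun j => Pi.single j 1) '' ↑S)) T := by
  induction S using Finset.induction_on generalizing T with
  | empty => simpa using hP.isUnitGeneratedOff T
  | insert j S _ ih =>
    rw [sup_span_image_insert]
    exact (ih (insert j T)).sup_span_single

end Decidable

def IsNonnegOnOrthant (Φ : (ι → ℤ) →ₗ.[ℤ] ℤ) : Prop :=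
  ∀ x : Φ.domain, 0 ≤ (x : ι → ℤ) → 0 ≤ Φ x

theorem IsNonnegOnOrthant.mul_apply_le {Φ : (ι → ℤ) →ₗ.[ℤ] ℤ} {j : ι} {t : ℤ}
    (hΦ : IsNonnegOnOrthant Φ) (hW : IsUnitGeneratedOff Φ.domain {j})
    (hneg : ∀ u : Φ.domain, IsUnitVec (u : ι → ℤ) → (∀ i ≠ j, 0 ≤ (u : ι → ℤ) i) →
      (u : ι → ℤ) j = -1 → -Φ u ≤ t)
    (hpos : ∀ u : Φ.domain, IsUnitVec (u : ι → ℤ) → 0 ≤ (u : ι → ℤ) → (u : ι → ℤ) j = 1 →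
      t ≤ Φ u)
    (x : Φ.domain) (hx : ∀ i ≠ j, 0 ≤ (x : ι → ℤ) i) : t * (x : ι → ℤ) j ≤ Φ x := by
  have hle : AddSubmonoid.closure (unitsOff Φ.domain {j}) ≤ Φ.domain.toAddSubmonoid :=
    AddSubmonoid.closure_le.2 fun u hu => hu.2.1
  have key : ∀ y ∈ AddSubmonoid.closure (unitsOff Φ.domain {j}),
      ∀ hy : y ∈ Φ.domain, t * y j ≤ Φ ⟨y, hy⟩ := by
    intro y hy
    induction hy using AddSubmonoid.closure_induction with
    | mem u hu =>
      intro huW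
      have hunit := hu.1
      have hu_off : ∀ i ≠ j, 0 ≤ u i := fun i hi => hu.2.2 i hi
      rcases hunit j with h | h | h
      · rw [h]
        linarith [hneg ⟨u, huW⟩ hunit hu_off h]
      · refine h ▸ (mul_zero t).symm ▸ hΦ _ fun i => ?_
        rcases eq_or_ne i j with rfl | hij
        exacts [h.ge, hu_off i hij]
      · rw [h, mul_one]
        refine hpos ⟨u, huW⟩ hunit (fun i => ?_) h
        rcases eq_or_ne i j with rfl | hij
        · simp [h]
        · exact hu_off i hij
    | zero =>
      intro _
      rw [Pi.zero_apply, mul_zero]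
      exact Φ.map_zero.ge
    | add y z hy hz ihy ihz =>
      intro hyz
      have : Φ ⟨y + z, hyz⟩ = Φ ⟨y, hle hy⟩ + Φ ⟨z, hle hz⟩ :=
        Φ.map_add ⟨y, hle hy⟩ ⟨z, hle hz⟩
      rw [Pi.add_apply, mul_add, this]
      linarith [ihy (hle hy), ihz (hle hz)]
  exact key x (hW x x.2 fun i hi => hx i hi) x.2

/-- The constraints on `t` are compatible because `u + v ≥ 0` whenever `u_j = -1` and `v_j = 1`. -/
theorem IsNonnegOnOrthant.exists_slope_le [Finite ι] {Φ : (ι → ℤ) →ₗ.[ℤ] ℤ} {j : ι}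
    (hΦ : IsNonnegOnOrthant Φ) (hW : IsUnitGeneratedOff Φ.domain {j}) :
    ∃ t : ℤ, 0 ≤ t ∧
      ∀ x : Φ.domain, (∀ i ≠ j, 0 ≤ (x : ι → ℤ) i) → t * (x : ι → ℤ) j ≤ Φ x := by
  set U : Set Φ.domain := {u | IsUnitVec (u : ι → ℤ)}
  have hU : U.Finite := finite_setOf_isUnitVec.preimage Subtype.val_injective.injOn
  set A := (fun u => -Φ u) '' {u ∈ U | (∀ i ≠ j, 0 ≤ (u : ι → ℤ) i) ∧ (u : ι → ℤ) j = -1}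
  set B := Φ '' {u ∈ U | 0 ≤ (u : ι → ℤ) ∧ (u : ι → ℤ) j = 1}
  have hAB : ∀ a ∈ A, ∀ b ∈ B, a ≤ b := by
    rintro _ ⟨u, ⟨-, hu, hu_j⟩, rfl⟩ _ ⟨v, ⟨-, hv, hv_j⟩, rfl⟩
    have huv : 0 ≤ ((u + v : Φ.domain) : ι → ℤ) := fun i => by
      rcases eq_or_ne i j with rfl | hij
      · simp [hu_j, hv_j]
      · exact add_nonneg (hu i hij) (hv i)
    linarith [Φ.map_add u v, hΦ _ huv]
  have hB : ∀ b ∈ B, 0 ≤ b := by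
    rintro _ ⟨v, ⟨-, hv, -⟩, rfl⟩
    exact hΦ v hv
  obtain ⟨t, ht0, hAt, htB⟩ :=
    Int.exists_nonneg_between ((hU.subset (Set.sep_subset _ _)).image _) hAB hB
  exact ⟨t, ht0, hΦ.mul_apply_le hW (fun u hunit hu hu_j => hAt _ ⟨u, ⟨hunit, hu, hu_j⟩, rfl⟩)
    fun u hunit hu hu_j => htB _ ⟨u, ⟨hunit, hu, hu_j⟩, rfl⟩⟩

theorem IsNonnegOnOrthant.exists_sup_span_single [Finite ι] [DecidableEq ι]
    {Φ : (ι → ℤ) →ₗ.[ℤ] ℤ} {j : ι} (hΦ : IsNonnegOnOrthant Φ)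
    (hW : IsUnitGeneratedOff Φ.domain {j}) :
    ∃ Ψ : (ι → ℤ) →ₗ.[ℤ] ℤ, Ψ.domain = Φ.domain ⊔ span ℤ {Pi.single j 1} ∧ Φ ≤ Ψ ∧
      IsNonnegOnOrthant Ψ := by
  obtain ⟨t, ht0, ht⟩ := hΦ.exists_slope_le hW
  set g := (t • LinearMap.proj j : (ι → ℤ) →ₗ[ℤ] ℤ).toPMap (span ℤ {Pi.single j 1})
  have hg : ∀ z : g.domain, g z = t * (z : ι → ℤ) j := fun _ => rfl
  have hg_off : ∀ z : g.domain, ∀ i ≠ j, (z : ι → ℤ) i = 0 := by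
    rintro ⟨z, hz⟩ i hij
    obtain ⟨m, rfl⟩ := mem_span_singleton.1 hz
    simp [hij]
  have compat : ∀ (x : Φ.domain) (z : g.domain), (x : ι → ℤ) = z → Φ x = g z := by
    intro x z hxz
    have hx := ht x fun i hij => by rw [hxz, hg_off z i hij]
    have hnx := ht (-x) fun i hij => by simp [hxz, hg_off z i hij]
    rw [Φ.map_neg, NegMemClass.coe_neg, Pi.neg_apply, mul_neg] at hnx
    rw [hg, ← hxz]
    linarith
  refine ⟨Φ.sup g compat, rfl, Φ.left_le_sup g compat, fun x hx => ?_⟩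
  obtain ⟨w, hw, z, hz, hwz⟩ := mem_sup.1 x.2
  rw [LinearPMap.sup_apply compat ⟨w, hw⟩ ⟨z, hz⟩ x hwz, hg]
  have hw_off := ht ⟨w, hw⟩ fun i hij => by
    have hzi : z i = 0 := hg_off ⟨z, hz⟩ i hij
    simpa [← hwz, hzi] using hx i
  have hxj : (x : ι → ℤ) j = w j + z j := by rw [← hwz, Pi.add_apply]
  have := mul_nonneg ht0 (hx j)
  rw [hxj] at this
  linarith

theorem HasP.exists_extension_sup_span [Finite ι] [DecidableEq ι] {V : Submodule ℤ (ι → ℤ)}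
    (hP : HasP V) (φ : V →ₗ[ℤ] ℤ) (hφ : IsNonnegOnOrthant ⟨V, φ⟩) (S : Finset ι) :
    ∃ Ψ : (ι → ℤ) →ₗ.[ℤ] ℤ, Ψ.domain = V ⊔ span ℤ ((fun j => Pi.single j 1) '' ↑S) ∧
      ⟨V, φ⟩ ≤ Ψ ∧ IsNonnegOnOrthant Ψ := by
  induction S using Finset.induction_on with
  | empty => exact ⟨⟨V, φ⟩, by simp, le_rfl, hφ⟩
  | insert j S _ ih =>
    obtain ⟨Ψ, hdom, hle, hΨ⟩ := ih
    obtain ⟨Ψ', hdom', hle', hΨ'⟩ :=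
      hΨ.exists_sup_span_single (j := j) (hdom ▸ hP.isUnitGeneratedOff_sup_span S {j})
    exact ⟨Ψ', by rw [hdom', hdom, sup_span_image_insert], hle.trans hle', hΨ'⟩

theorem HasP.exists_nonneg_linearMap_extension [Fintype ι] [DecidableEq ι]
    {V : Submodule ℤ (ι → ℤ)} (hP : HasP V) (φ : V →ₗ[ℤ] ℤ)
    (hφ : ∀ x : V, 0 ≤ (x : ι → ℤ) → 0 ≤ φ x) :
    ∃ L : (ι → ℤ) →ₗ[ℤ] ℤ, (∀ x : V, L x = φ x) ∧ ∀ x, 0 ≤ x → 0 ≤ L x := by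
  obtain ⟨Ψ, hdom, hle, hΨ⟩ := hP.exists_extension_sup_span φ hφ Finset.univ
  have htop : Ψ.domain = ⊤ := by
    refine eq_top_mono (hdom ▸ le_sup_right) ?_
    rw [Finset.coe_univ, Set.image_univ, ← funext (Pi.basisFun_apply ℤ ι),
      (Pi.basisFun ℤ ι).span_eq]
  refine ⟨Ψ.toFun ∘ₗ (LinearEquiv.ofTop _ htop).symm, fun x => (hle.2 rfl).symm,
    fun x hx => hΨ _ hx⟩

theorem LinearMap.exists_nat_coeffs_of_nonneg [Fintype ι] [DecidableEq ι]
    (L : (ι → ℤ) →ₗ[ℤ] ℤ) (hL : ∀ x, 0 ≤ x → 0 ≤ L x) :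
    ∃ c : ι → ℕ, ∀ x, L x = ∑ i, (c i : ℤ) * x i := by
  refine ⟨fun i => (L (Pi.single i 1)).toNat, fun x => ?_⟩
  conv_lhs => rw [← Finset.univ_sum_single x, map_sum]
  refine Finset.sum_congr rfl fun i _ => ?_
  rw [Int.toNat_of_nonneg (hL _ (Pi.single_nonneg.2 zero_le_one)), mul_comm, ← smul_eq_mul,
    ← map_smul, ← Pi.single_smul', smul_eq_mul, mul_one]

/-- For `v₀ = (1,…,1)`: if `V ⊆ ℤ^n` has property `𝔓` and `φ : V → ℤ` is non-negative on
`V ∩ ℕ^n`, then `φ` is given by non-negative integer coefficients `c_i`, i.e. it extends to a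
homomorphism `ℤ^n → ℤ` non-negative on `ℕ^n`. -/
theorem stmt3 {n : ℕ} (V : Submodule ℤ (Fin n → ℤ)) (hP : HasP V)
    (φ : V →+ ℤ) (hφ : ∀ x : V, (∀ i, 0 ≤ (x : Fin n → ℤ) i) → 0 ≤ φ x) :
    ∃ c : Fin n → ℕ, ∀ x : V, φ x = ∑ i, (c i : ℤ) * (x : Fin n → ℤ) i := by
  obtain ⟨L, hLφ, hL⟩ := hP.exists_nonneg_linearMap_extension φ.toIntLinearMap hφ
  obtain ⟨c, hc⟩ := L.exists_nat_coeffs_of_nonneg hL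
  exact ⟨c, fun x => (hLφ x).symm.trans (hc x)⟩
end

section
/- Let G be a classical Gauss diagram with n ≥ 2 arrows (a circle with n disjoint signed arrows, dividing the circle into 2n edges). Let M : ℝ^{2n} → ℝ^{n+1} be the linear map whose rows are the edge-incidence vectors of the n distinguished loops together with the full circle. Then M has rank n+1, i.e. dim(ker M) = n - 1. -/
/-- A Gauss diagram with `n` arrows: the `2n` arrow endpoints are the points of the cyclic group
`ZMod (2*n)` (listed in the cyclic order of the oriented circle), and arrow `a` points from its
underpass point `tail a` to its overpass point `head a`.  The edge `e` of the diagram is the arc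
of the circle from the point `e` to the point `e + 1`. -/
structure GaussDiagram (n : ℕ) where
  head : Fin n → ZMod (2 * n)
  tail : Fin n → ZMod (2 * n)
  inj : Function.Injective (Sum.elim head tail)

namespace GaussDiagram

variable {n : ℕ}

/-- The edge-characteristic vector of the distinguished loop of arrow `a`: it traverses the
edges from `head a` to `tail a` along the orientation of the circle (and returns along the
arrow). -/
def arcChain (G : GaussDiagram n) (a : Fin n) : ZMod (2 * n) → ℤ :=
  fun e => if (e - G.head a).val < (G.tail a - G.head a).val then 1 else 0

/-- The `(n+1) × 2n` matrix whose rows are the edge-characteristic vectors of the `n`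
distinguished loops together with the full circle (the all-ones row, indexed by `none`). -/
def loopMatrix (G : GaussDiagram n) : Matrix (Option (Fin n)) (ZMod (2 * n)) ℤ :=
  fun r e => r.elim 1 fun a => G.arcChain a e

/-- The elementary refinement move of type II+ at arrow `a`: add `+1` on the edge directly
following each endpoint of `a` and `-1` on the edge directly preceding it (with multiplicity). -/
def moveVec (G : GaussDiagram n) (a : Fin n) : ZMod (2 * n) → ℤ :=
  fun e => (if e = G.head a then 1 else 0) + (if e = G.tail a then 1 else 0)
    - (if e = G.head a - 1 then 1 else 0) - (if e = G.tail a - 1 then 1 else 0)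

/-- The edge `e` (from point `e` to point `e+1`) is adjacent to the arrow `a` if one of its two
boundary points is an endpoint of `a`. -/
def adjacent (G : GaussDiagram n) (e : ZMod (2 * n)) (a : Fin n) : Prop :=
  e = G.head a ∨ e + 1 = G.head a ∨ e = G.tail a ∨ e + 1 = G.tail a

end GaussDiagram

/-- A move of a loop in a Gauss diagram: either follow the next edge of the circle in the
direction of its orientation (`circ`), or jump along an arrow, in either direction. -/
inductive Move (n : ℕ) where
  | circ : Move n
  | jumpHT : Fin n → Move n
  | jumpTH : Fin n → Move n

/-- Whether a move is a jump along an arrow. -/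
def Move.isJump {n : ℕ} : Move n → Prop
  | .circ => False
  | _ => True

namespace GaussDiagram

/-- The point reached by performing one move starting at the point `p`. -/
def target (G : GaussDiagram n) (p : ZMod (2 * n)) : Move n → ZMod (2 * n)
  | .circ => p + 1
  | .jumpHT a => G.tail a
  | .jumpTH a => G.head a

/-- Validity of a sequence of moves starting at `p`: a jump along an arrow may only be performed
from an endpoint of that arrow. -/
def validFrom (G : GaussDiagram n) : ZMod (2 * n) → List (Move n) → Prop
  | _, [] => True
  | p, mv :: r =>
      (match mv with
        | .circ => True
        | .jumpHT a => p = G.head a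
        | .jumpTH a => p = G.tail a) ∧ validFrom G (G.target p mv) r

/-- The point reached after performing a sequence of moves from `p`. -/
def run (G : GaussDiagram n) : ZMod (2 * n) → List (Move n) → ZMod (2 * n)
  | p, [] => p
  | p, mv :: r => run G (G.target p mv) r

/-- A loop in the Gauss diagram which respects the orientation of the circle: a closed valid
sequence of moves (circle arcs are always traversed in the orientation direction, arrows may be
traversed both ways). -/
structure Loop (G : GaussDiagram n) where
  start : ZMod (2 * n)
  moves : List (Move n)
  valid : G.validFrom start moves
  closed : G.run start moves = start

/-- A loop is *reduced* (nontrivial) if it is nonempty and never backtracks: no two cyclically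
consecutive moves are jumps (two consecutive jumps necessarily cancel along the same arrow). -/
def Loop.Reduced {G : GaussDiagram n} (L : Loop G) : Prop :=
  L.moves ≠ [] ∧
  L.moves.Chain' (fun m₁ m₂ => ¬(m₁.isJump ∧ m₂.isJump)) ∧
  ∀ m₁ ∈ L.moves.getLast?, ∀ m₂ ∈ L.moves.head?, ¬(m₁.isJump ∧ m₂.isJump)

/-- Whether a sequence of moves from `p` meets a marking of the marking function `m` (which
records the number of (positive) markings on each edge). -/
def meetsFrom (G : GaussDiagram n) (m : ZMod (2 * n) → ℕ) :
    ZMod (2 * n) → List (Move n) → Prop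
  | _, [] => False
  | p, .circ :: r => 0 < m p ∨ meetsFrom G m (p + 1) r
  | _, .jumpHT a :: r => meetsFrom G m (G.tail a) r
  | _, .jumpTH a :: r => meetsFrom G m (G.head a) r

/-- A loop meets a marking if one of the circle arcs it traverses carries a marking. -/
def Loop.Meets {G : GaussDiagram n} (m : ZMod (2 * n) → ℕ) (L : Loop G) : Prop :=
  G.meetsFrom m L.start L.moves

/-- In the diagram obtained by deleting the arrows of `R`, the point `p` is directly preceded by
a marking: going backwards along the circle from `p` one finds a marking before meeting any
endpoint of a non-deleted arrow. -/
def precededBy (G : GaussDiagram n) (m : ZMod (2 * n) → ℕ) (R : Set (Fin n))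
    (p : ZMod (2 * n)) : Prop :=
  ∃ j : ℕ, 0 < m (p - 1 - (j : ZMod (2 * n))) ∧
    ∀ i < j, ∃ a ∈ R, G.head a = p - 1 - (i : ZMod (2 * n)) ∨
      G.tail a = p - 1 - (i : ZMod (2 * n))

/-- The set of arrows removed after `k` rounds of deleting the arrows of level `1` (those whose
two endpoints are both directly preceded by a marking in the current diagram). -/
def removedAt (G : GaussDiagram n) (m : ZMod (2 * n) → ℕ) : ℕ → Set (Fin n)
  | 0 => ∅
  | k + 1 => removedAt G m k ∪
      {a | G.precededBy m (removedAt G m k) (G.head a) ∧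
           G.precededBy m (removedAt G m k) (G.tail a)}

/-- An arrow has a well-defined level if it is eventually deleted in the level process. -/
def HasLevel (G : GaussDiagram n) (m : ZMod (2 * n) → ℕ) (a : Fin n) : Prop :=
  ∃ k, a ∈ G.removedAt m k

/-- The number of times a sequence of moves from `p` traverses each edge of the circle. -/
def edgeCount (G : GaussDiagram n) : ZMod (2 * n) → List (Move n) → ZMod (2 * n) → ℤ
  | _, [] => 0
  | p, .circ :: r => fun e => (if e = p then 1 else 0) + edgeCount G (p + 1) r e
  | _, .jumpHT a :: r => edgeCount G (G.tail a) r
  | _, .jumpTH a :: r => edgeCount G (G.head a) r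

/-- The net number of traversals of each arrow, counted positively in the tail-to-head
direction (the direction used by the distinguished loops). -/
def netJump {n : ℕ} : List (Move n) → Fin n → ℤ
  | [] => 0
  | .circ :: r => netJump r
  | .jumpHT a :: r => fun b => netJump r b - (if b = a then 1 else 0)
  | .jumpTH a :: r => fun b => (if b = a then 1 else 0) + netJump r b

/-- `y` is a refinement of the decorated Gauss diagram with arrow valuations `dA` and circle
valuation `d`: the sum of the markings along each distinguished loop is the corresponding
valuation, and the total sum is the valuation of the circle. -/
def IsRefinement [NeZero (2 * n)] (G : GaussDiagram n) (dA : Fin n → ℤ) (d : ℤ)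
    (y : ZMod (2 * n) → ℤ) : Prop :=
  (∀ a, ∑ e, G.arcChain a e * y e = dA a) ∧ ∑ e, y e = d

/-- The homology class in `H₁(ℝ × S¹) = ℤ` of a loop of the decorated Gauss diagram with arrow
valuations `dA` and circle valuation `d`, computed by expressing the cycle of the loop in the
basis formed by the distinguished loops and the circle. -/
def loopClass [NeZero (2 * n)] (G : GaussDiagram n) (dA : Fin n → ℤ) (d : ℤ)
    (L : Loop G) : ℤ :=
  ∑ a, netJump L.moves a * dA a +
    (G.edgeCount L.start L.moves 0 - ∑ a, netJump L.moves a * G.arcChain a 0) * d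

end GaussDiagram

/-!
The discrete derivative `e ↦ v e - v (e - 1)` of the edge vector `v` of the distinguished loop of
an arrow `a` is `+1` at `head a`, `-1` at `tail a` and `0` elsewhere, while that of the circle
vanishes. Since heads are distinct and never tails, differentiating a vanishing linear combination
of the rows at `head b` isolates the coefficient of the loop of `b`; once all loop coefficients
vanish, so does that of the circle.
-/


namespace ZMod

theorem indicator_val_lt_sub_indicator_val_sub_one_lt {m : ℕ} [NeZero m] (x d : ZMod m) :
    ((if x.val < d.val then 1 else 0 : ℤ) - if (x - 1).val < d.val then 1 else 0) =
      (if x = 0 then 1 else 0) - if x = d then 1 else 0 := by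
  obtain ⟨k, rfl⟩ := Nat.exists_eq_succ_of_ne_zero (NeZero.ne m)
  have hd : d.val ≤ k := Nat.lt_succ_iff.mp d.val_lt
  rcases eq_or_ne x 0 with rfl | hx
  · rw [zero_sub, val_neg_one, if_neg (not_lt.mpr hd)]
    rcases eq_or_ne d 0 with rfl | hd0 <;> simp [*, val_pos, eq_comm]
  · have hxpos : 0 < x.val := val_pos.mpr hx
    have hx1 : (x - 1).val = x.val - 1 := by
      have h1 : (1 : ZMod (k + 1)).val = 1 := by
        have := x.val_lt
        rw [val_one_eq_one_mod, Nat.mod_eq_of_lt (by omega)]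
      rw [val_sub (h1.trans_le hxpos), h1]
    have hxd : x = d ↔ x.val = d.val := (val_injective _).eq_iff.symm
    simp only [hx1, hx, hxd, if_false]
    split_ifs <;> omega

end ZMod

namespace GaussDiagram

variable {n : ℕ} (G : GaussDiagram n)

theorem head_ne_tail (a b : Fin n) : G.head a ≠ G.tail b :=
  fun h => Sum.inl_ne_inr (G.inj h)

theorem head_injective : Function.Injective G.head :=
  fun _ _ h => Sum.inl_injective (G.inj h)

variable [NeZero (2 * n)]

theorem arcChain_sub_arcChain_sub_one (a : Fin n) (e : ZMod (2 * n)) :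
    G.arcChain a e - G.arcChain a (e - 1) =
      (if e = G.head a then 1 else 0) - if e = G.tail a then 1 else 0 := by
  simpa only [arcChain, sub_right_comm e 1, sub_eq_zero, sub_left_inj] using
    ZMod.indicator_val_lt_sub_indicator_val_sub_one_lt (e - G.head a) (G.tail a - G.head a)

theorem arcChain_head_sub_arcChain_head_sub_one (a b : Fin n) :
    G.arcChain a (G.head b) - G.arcChain a (G.head b - 1) = if a = b then 1 else 0 := by
  rw [arcChain_sub_arcChain_sub_one, if_neg (G.head_ne_tail b a), sub_zero]
  exact if_congr ⟨fun h => (G.head_injective h).symm, fun h => h ▸ rfl⟩ rfl rfl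

theorem linearIndependent_row_loopMatrix_map (R : Type*) [Ring R] :
    LinearIndependent R (G.loopMatrix.map ((↑) : ℤ → R)).row := by
  rw [Fintype.linearIndependent_iff]
  intro g hg
  have hcol (e : ZMod (2 * n)) : g none + ∑ a, g (some a) * G.arcChain a e = 0 := by
    simpa [Fintype.sum_option, loopMatrix, Matrix.row] using congrFun hg e
  have hloop (b : Fin n) : g (some b) = 0 := by
    have hdiff := congrArg₂ (· - ·) (hcol (G.head b)) (hcol (G.head b - 1))
    simp only [add_sub_add_left_eq_sub, ← Finset.sum_sub_distrib, ← mul_sub, ← Int.cast_sub,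
      arcChain_head_sub_arcChain_head_sub_one, sub_self] at hdiff
    simpa using hdiff
  rintro (_ | b)
  · simpa [hloop] using hcol 0
  · exact hloop b

end GaussDiagram

theorem stmt6_general (n : ℕ) [NeZero (2 * n)] (G : GaussDiagram n) :
    (G.loopMatrix.map ((↑) : ℤ → ℝ)).rank = n + 1 := by
  rw [(G.linearIndependent_row_loopMatrix_map ℝ).rank_matrix, Fintype.card_option, Fintype.card_fin]

/-- For a Gauss diagram with `n ≥ 2` arrows, the `(n+1) × 2n` real matrix whose rows are the
edge-incidence vectors of the `n` distinguished loops together with the full circle has rank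
`n + 1`; equivalently `dim ker M = n - 1`. -/
theorem stmt6 (n : ℕ) [NeZero (2 * n)] (hn : 2 ≤ n) (G : GaussDiagram n) :
    (G.loopMatrix.map ((↑) : ℤ → ℝ)).rank = n + 1 :=
  stmt6_general n G
end

section
/- Let G be a Gauss diagram with n ≥ 2 arrows, edges e_1,…,e_{2n}, and M ∈ M_{n+1,2n}(ℤ) the matrix of distinguished loops plus the circle as above. For each arrow A, let x_A ∈ ℤ^{2n} be the 'type II+ move' vector: +1 on the two edges immediately following the endpoints of A, −1 on the two edges immediately preceding them (with signed multiplicity when edges coincide). Then: (a) each x_A ∈ ker M; (b) any n−1 of the vectors {x_A} form a ℤ-basis of ℤ^{2n} ∩ ker M; (c) the type II− move vector of one arrow equals the sum of the type II+ move vectors x_A of all the other arrows. -/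
namespace GaussDiagramAux

open GaussDiagram

variable {n : ℕ}

/-- `gfun a` is the indicator function of the endpoint set of the arrow `a`. -/
def gfun (G : GaussDiagram n) (a : Fin n) (p : ZMod (2 * n)) : ℤ :=
  (if p = G.head a then 1 else 0) + (if p = G.tail a then 1 else 0)

lemma head_ne_tail (G : GaussDiagram n) (a b : Fin n) : G.head a ≠ G.tail b := fun h => by
  simpa using G.inj (a₁ := Sum.inl a) (a₂ := Sum.inr b) h

lemma head_inj (G : GaussDiagram n) {a b : Fin n} (h : G.head a = G.head b) : a = b := by
  simpa using G.inj (a₁ := Sum.inl a) (a₂ := Sum.inl b) h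

lemma tail_inj (G : GaussDiagram n) {a b : Fin n} (h : G.tail a = G.tail b) : a = b := by
  simpa using G.inj (a₁ := Sum.inr a) (a₂ := Sum.inr b) h

lemma moveVec_eq_gfun (G : GaussDiagram n) (a : Fin n) (e : ZMod (2 * n)) :
    G.moveVec a e = gfun G a e - gfun G a (e + 1) := by
  simp only [moveVec, gfun, eq_sub_iff_add_eq]
  ring

lemma gfun_head (G : GaussDiagram n) (a b : Fin n) :
    gfun G b (G.head a) = if a = b then 1 else 0 := by
  rw [gfun, if_neg (head_ne_tail G a b)]
  by_cases h : a = b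
  · subst h; simp
  · rw [if_neg (fun hh => h (head_inj G hh)), if_neg h, add_zero]

lemma gfun_tail (G : GaussDiagram n) (a b : Fin n) :
    gfun G b (G.tail a) = if a = b then 1 else 0 := by
  rw [gfun, if_neg (fun hh => head_ne_tail G b a hh.symm)]
  by_cases h : a = b
  · subst h; simp
  · rw [if_neg (fun hh => h (tail_inj G hh)), if_neg h, zero_add]

section NeZero

variable [NeZero (2 * n)]

lemma sum_shift (f : ZMod (2 * n) → ℤ) : ∑ e, f (e + 1) = ∑ e, f e :=
  Fintype.sum_equiv (Equiv.addRight 1) _ _ fun _ => rfl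

lemma val_sub_one (x : ZMod (2 * n)) :
    (x - 1).val = (x.val + (2 * n - 1)) % (2 * n) := by
  have h1 : 1 ≤ 2 * n := Nat.one_le_iff_ne_zero.mpr (NeZero.ne (2 * n))
  have : x - 1 = ((x.val + (2 * n - 1) : ℕ) : ZMod (2 * n)) := by
    rw [Nat.cast_add, ZMod.natCast_zmod_val, Nat.cast_sub h1, ZMod.natCast_self]
    ring
  rw [this, ZMod.val_natCast]

lemma arcChain_step (G : GaussDiagram n) (b : Fin n) (p : ZMod (2 * n)) :
    G.arcChain b p - G.arcChain b (p - 1) =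
      (if p = G.head b then 1 else 0) - (if p = G.tail b then 1 else 0) := by
  have hnt : G.head b ≠ G.tail b := head_ne_tail G b b
  have hL0 : (G.tail b - G.head b).val ≠ 0 := by
    intro hc
    exact hnt ((sub_eq_zero.mp ((ZMod.val_eq_zero _).mp hc)).symm)
  have hLlt : (G.tail b - G.head b).val < 2 * n := ZMod.val_lt _
  have hult : (p - G.head b).val < 2 * n := ZMod.val_lt _
  have hsub : p - 1 - G.head b = (p - G.head b) - 1 := by ring
  have hval : (p - 1 - G.head b).val = ((p - G.head b).val + (2 * n - 1)) % (2 * n) := by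
    rw [hsub, val_sub_one]
  have hph : (p = G.head b) ↔ ((p - G.head b).val = 0) := by
    rw [ZMod.val_eq_zero, sub_eq_zero]
  have hpt : (p = G.tail b) ↔ ((p - G.head b).val = (G.tail b - G.head b).val) := by
    constructor
    · intro h; rw [h]
    · intro h
      have := ZMod.val_injective (2 * n) h
      have h2 := congrArg (· + G.head b) this
      simpa using h2
  set L := (G.tail b - G.head b).val
  set u := (p - G.head b).val
  have hmod : (u + (2 * n - 1)) % (2 * n) = if u = 0 then 2 * n - 1 else u - 1 := by
    rcases Nat.eq_zero_or_pos u with h | h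
    · rw [if_pos h, h, zero_add, Nat.mod_eq_of_lt (by omega)]
    · rw [if_neg (by omega)]
      have : u + (2 * n - 1) = (u - 1) + 1 * (2 * n) := by omega
      rw [this, Nat.add_mul_mod_self_right, Nat.mod_eq_of_lt (by omega)]
  rw [arcChain, arcChain, hval, hmod, if_congr hph rfl rfl,
    if_congr hpt rfl rfl]
  split_ifs <;> omega

lemma sum_arc_mul_sub (G : GaussDiagram n) (b : Fin n) (f : ZMod (2 * n) → ℤ) :
    ∑ e, G.arcChain b e * (f e - f (e + 1)) = f (G.head b) - f (G.tail b) := by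
  have h1 : ∑ e, G.arcChain b e * f (e + 1) = ∑ e, G.arcChain b (e - 1) * f e := by
    apply Fintype.sum_equiv (Equiv.addRight 1)
    intro e
    simp [Equiv.coe_addRight, add_sub_cancel_right]
  calc ∑ e, G.arcChain b e * (f e - f (e + 1))
      = ∑ e, G.arcChain b e * f e - ∑ e, G.arcChain b e * f (e + 1) := by
        rw [← Finset.sum_sub_distrib]
        exact Finset.sum_congr rfl fun e _ => by ring
    _ = ∑ e, (G.arcChain b e - G.arcChain b (e - 1)) * f e := by
        rw [h1, ← Finset.sum_sub_distrib]
        exact Finset.sum_congr rfl fun e _ => by ring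
    _ = ∑ e, ((if e = G.head b then 1 else 0) - (if e = G.tail b then 1 else 0)) * f e := by
        exact Finset.sum_congr rfl fun e _ => by rw [arcChain_step]
    _ = f (G.head b) - f (G.tail b) := by
        simp [sub_mul, Finset.sum_sub_distrib, ite_mul, Finset.sum_ite_eq']

lemma row_moveVec (G : GaussDiagram n) (b a : Fin n) :
    ∑ e, G.arcChain b e * G.moveVec a e = 0 := by
  have h := sum_arc_mul_sub G b (gfun G a)
  have h2 : ∑ e, G.arcChain b e * G.moveVec a e =
      ∑ e, G.arcChain b e * (gfun G a e - gfun G a (e + 1)) :=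
    Finset.sum_congr rfl fun e _ => by rw [moveVec_eq_gfun]
  rw [h2, h, gfun_head, gfun_tail, sub_self]

lemma sum_gfun (G : GaussDiagram n) (p : ZMod (2 * n)) : ∑ a, gfun G a p = 1 := by
  have hbij : Function.Bijective (Sum.elim G.head G.tail) := by
    rw [Fintype.bijective_iff_injective_and_card]
    refine ⟨G.inj, ?_⟩
    simp [ZMod.card]
    ring
  obtain ⟨s₀, hs₀⟩ := hbij.surjective p
  calc ∑ a, gfun G a p
      = ∑ s : Fin n ⊕ Fin n, (if p = Sum.elim G.head G.tail s then 1 else 0) := by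
        rw [Fintype.sum_sum_type, ← Finset.sum_add_distrib]
        rfl
    _ = ∑ s : Fin n ⊕ Fin n, (if s = s₀ then 1 else 0) := by
        refine Finset.sum_congr rfl fun s _ => ?_
        congr 1
        rw [eq_iff_iff]
        constructor
        · intro h; exact hbij.injective (by rw [← h, hs₀])
        · intro h; rw [h, hs₀]
    _ = 1 := by simp

lemma sum_moveVec (G : GaussDiagram n) : ∑ a, G.moveVec a = 0 := by
  funext e
  rw [Finset.sum_apply]
  calc ∑ a, G.moveVec a e = ∑ a, (gfun G a e - gfun G a (e + 1)) :=
        Finset.sum_congr rfl fun a _ => moveVec_eq_gfun G a e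
    _ = 0 := by rw [Finset.sum_sub_distrib, sum_gfun, sum_gfun, sub_self]

lemma sum_gfun_smul (G : GaussDiagram n) (f : ZMod (2 * n) → ℤ)
    (hf : ∀ a, f (G.head a) = f (G.tail a)) (p : ZMod (2 * n)) :
    ∑ a, f (G.head a) * gfun G a p = f p := by
  have hterm : ∀ a, f (G.head a) * gfun G a p = f p * gfun G a p := by
    intro a
    simp only [gfun, mul_add, mul_ite, mul_one, mul_zero]
    congr 1
    · split_ifs with h
      · rw [h]
      · rfl
    · split_ifs with h
      · rw [hf a, h]
      · rfl
  rw [Finset.sum_congr rfl fun a _ => hterm a, ← Finset.mul_sum, sum_gfun, mul_one]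

lemma repr_sum (G : GaussDiagram n) (f : ZMod (2 * n) → ℤ)
    (hf : ∀ a, f (G.head a) = f (G.tail a)) (e : ZMod (2 * n)) :
    ∑ a, f (G.head a) * G.moveVec a e = f e - f (e + 1) := by
  calc ∑ a, f (G.head a) * G.moveVec a e
      = ∑ a, (f (G.head a) * gfun G a e - f (G.head a) * gfun G a (e + 1)) := by
        refine Finset.sum_congr rfl fun a _ => ?_
        rw [moveVec_eq_gfun]; ring
    _ = f e - f (e + 1) := by
        rw [Finset.sum_sub_distrib, sum_gfun_smul G f hf, sum_gfun_smul G f hf]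

/-- Discrete antiderivative. -/
def anti (y : ZMod (2 * n) → ℤ) (p : ZMod (2 * n)) : ℤ :=
  -∑ k ∈ Finset.range p.val, y (k : ZMod (2 * n))

lemma sum_range_eq (y : ZMod (2 * n) → ℤ) :
    ∑ k ∈ Finset.range (2 * n), y ((k : ℕ) : ZMod (2 * n)) = ∑ e, y e := by
  rw [← Fin.sum_univ_eq_sum_range]
  apply Fintype.sum_bijective (fun i : Fin (2 * n) => ((i : ℕ) : ZMod (2 * n)))
  · rw [Fintype.bijective_iff_injective_and_card]
    refine ⟨fun i j h => ?_, by simp [ZMod.card]⟩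
    have := congrArg ZMod.val h
    rw [ZMod.val_cast_of_lt i.2, ZMod.val_cast_of_lt j.2] at this
    exact Fin.ext this
  · intro i; rfl

lemma anti_step (y : ZMod (2 * n) → ℤ) (hy : ∑ e, y e = 0) (e : ZMod (2 * n)) :
    anti y e - anti y (e + 1) = y e := by
  have hvl : e.val < 2 * n := ZMod.val_lt e
  have hcast : ((e.val : ℕ) : ZMod (2 * n)) = e := ZMod.natCast_zmod_val e
  have hsucc : e + 1 = ((e.val + 1 : ℕ) : ZMod (2 * n)) := by
    rw [Nat.cast_add, ZMod.natCast_zmod_val, Nat.cast_one]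
  by_cases hw : e.val + 1 < 2 * n
  · have h1 : (e + 1).val = e.val + 1 := by
      rw [hsucc, ZMod.val_natCast, Nat.mod_eq_of_lt hw]
    simp only [anti, h1, Finset.sum_range_succ, hcast]
    ring
  · have he : e.val = 2 * n - 1 := by omega
    have h1 : e + 1 = 0 := by
      rw [hsucc, he, Nat.sub_add_cancel (by omega), ZMod.natCast_self]
    have h2 : anti y (e + 1) = 0 := by
      simp [anti, h1, ZMod.val_zero]
    rw [h2, sub_zero, anti]
    have h3 : ∑ k ∈ Finset.range (2 * n), y ((k : ℕ) : ZMod (2 * n)) = 0 := by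
      rw [sum_range_eq]; exact hy
    have h4 : 2 * n = (2 * n - 1) + 1 := by omega
    have h3' : ∑ k ∈ Finset.range ((2 * n - 1) + 1), y ((k : ℕ) : ZMod (2 * n)) = 0 := by
      rw [← h4]; exact h3
    rw [Finset.sum_range_succ, ← he, hcast] at h3'
    linarith

lemma step_const (f : ZMod (2 * n) → ℤ) (hstep : ∀ e, f e = f (e + 1))
    (p q : ZMod (2 * n)) : f p = f q := by
  have key : ∀ (k : ℕ) (r : ZMod (2 * n)), f r = f (r + (k : ZMod (2 * n))) := by
    intro k
    induction k with
    | zero => intro r; simp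
    | succ m ih =>
        intro r
        have : r + ((m + 1 : ℕ) : ZMod (2 * n)) = (r + (m : ZMod (2 * n))) + 1 := by
          push_cast; ring
        rw [this, ← hstep, ← ih]
  have : q = p + (((q - p).val : ℕ) : ZMod (2 * n)) := by
    rw [ZMod.natCast_zmod_val]; ring
  rw [this, ← key]

end NeZero

end GaussDiagramAux

open GaussDiagramAux in
/-- For a Gauss diagram with `n ≥ 2` arrows: (a) each type II+ vector `x_A` lies in `ker M`;
(b) for any arrow `a₀`, the remaining `n - 1` vectors `x_A` are linearly independent over `ℤ`
and span `ℤ^{2n} ∩ ker M`; (c) the type II- move of `a₀` (the negative of `x_{a₀}`) is the sum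
of the type II+ moves of all the other arrows. -/
theorem stmt7 (n : ℕ) [NeZero (2 * n)] (hn : 2 ≤ n) (G : GaussDiagram n) (a₀ : Fin n) :
    (∀ a, G.loopMatrix.mulVec (G.moveVec a) = 0) ∧
    LinearIndependent ℤ (fun a : {a : Fin n // a ≠ a₀} => G.moveVec a.1) ∧
    Submodule.span ℤ (Set.range (fun a : {a : Fin n // a ≠ a₀} => G.moveVec a.1)) =
      LinearMap.ker G.loopMatrix.mulVecLin ∧
    -G.moveVec a₀ = ∑ a ∈ Finset.univ.erase a₀, G.moveVec a := by
  -- Part (a)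
  have parta : ∀ a, G.loopMatrix.mulVec (G.moveVec a) = 0 := by
    intro a
    funext r
    cases r with
    | none =>
        show ∑ e, G.loopMatrix none e * G.moveVec a e = 0
        calc ∑ e, G.loopMatrix none e * G.moveVec a e
            = ∑ e, (gfun G a e - gfun G a (e + 1)) := by
              refine Finset.sum_congr rfl fun e _ => ?_
              rw [moveVec_eq_gfun]
              simp [GaussDiagram.loopMatrix]
          _ = 0 := by rw [Finset.sum_sub_distrib, sum_shift, sub_self]
    | some b =>
        show ∑ e, G.loopMatrix (some b) e * G.moveVec a e = 0
        calc ∑ e, G.loopMatrix (some b) e * G.moveVec a e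
            = ∑ e, G.arcChain b e * G.moveVec a e :=
              Finset.sum_congr rfl fun e _ => rfl
          _ = 0 := row_moveVec G b a
  refine ⟨parta, ?_, ?_, ?_⟩
  -- Part (b1): linear independence
  · rw [Fintype.linearIndependent_iff]
    intro c hc i
    set c' : Fin n → ℤ := fun a => if h : a = a₀ then 0 else c ⟨a, h⟩ with hc'
    have hcoe : ∀ j : {a : Fin n // a ≠ a₀}, c' j.1 = c j := fun j => dif_neg j.2
    have hsum : ∑ a, c' a • G.moveVec a = 0 := by
      rw [← Finset.add_sum_erase _ _ (Finset.mem_univ a₀)]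
      have h0 : c' a₀ = 0 := dif_pos rfl
      rw [h0, zero_smul, zero_add]
      rw [Finset.sum_subtype (Finset.univ.erase a₀)
        (p := fun a => a ≠ a₀) (by simp) (fun a => c' a • G.moveVec a)]
      rw [← hc]
      exact Finset.sum_congr rfl fun j _ => by rw [hcoe]
    set f : ZMod (2 * n) → ℤ := fun p => ∑ a, c' a * gfun G a p with hf
    have hstep : ∀ e, f e = f (e + 1) := by
      intro e
      have hce := congrFun hsum e
      rw [Finset.sum_apply] at hce
      simp only [Pi.zero_apply] at hce
      have h2 : ∑ a, c' a * (gfun G a e - gfun G a (e + 1)) = 0 := by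
        rw [← hce]
        exact Finset.sum_congr rfl fun a _ => by
          rw [Pi.smul_apply, smul_eq_mul, moveVec_eq_gfun]
      have h3 : f e - f (e + 1) = 0 := by
        rw [hf]
        simp only
        rw [← Finset.sum_sub_distrib, ← h2]
        exact Finset.sum_congr rfl fun a _ => by ring
      linarith
    have hfhead : ∀ a, f (G.head a) = c' a := by
      intro a
      rw [hf]
      simp only [gfun_head]
      rw [Finset.sum_congr rfl (fun b _ => by rw [mul_ite, mul_one, mul_zero]),
        Finset.sum_ite_eq Finset.univ a c', if_pos (Finset.mem_univ a)]
    have : c' i.1 = c' a₀ := by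
      rw [← hfhead, ← hfhead]
      exact step_const f hstep _ _
    rw [← hcoe, this]
    exact dif_pos rfl
  -- Part (b2): spanning
  · apply le_antisymm
    · rw [Submodule.span_le]
      rintro _ ⟨i, rfl⟩
      rw [SetLike.mem_coe, LinearMap.mem_ker, Matrix.mulVecLin_apply]
      exact parta i.1
    · intro y hy
      rw [LinearMap.mem_ker, Matrix.mulVecLin_apply] at hy
      have h0 : ∑ e, y e = 0 := by
        have := congrFun hy none
        simpa [Matrix.mulVec, dotProduct, GaussDiagram.loopMatrix] using this
      have hrow : ∀ b, ∑ e, G.arcChain b e * y e = 0 := by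
        intro b
        have := congrFun hy (some b)
        simpa [Matrix.mulVec, dotProduct, GaussDiagram.loopMatrix] using this
      set f := anti y with hfdef
      have hstep : ∀ e, y e = f e - f (e + 1) := fun e => (anti_step y h0 e).symm
      have hf : ∀ a, f (G.head a) = f (G.tail a) := by
        intro a
        have h1 := sum_arc_mul_sub G a f
        have h2 : ∑ e, G.arcChain a e * (f e - f (e + 1)) = 0 := by
          rw [← hrow a]
          exact Finset.sum_congr rfl fun e _ => by rw [← hstep]
        rw [h2] at h1
        linarith [h1]
      have hrepr : y = ∑ a, f (G.head a) • G.moveVec a := by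
        funext e
        rw [Finset.sum_apply]
        rw [hstep e, ← repr_sum G f hf e]
        exact Finset.sum_congr rfl fun a _ => by rw [Pi.smul_apply, smul_eq_mul]
      have hsumv : ∑ a ∈ Finset.univ.erase a₀, G.moveVec a = -G.moveVec a₀ := by
        rw [Finset.sum_erase_eq_sub (Finset.mem_univ a₀), sum_moveVec, zero_sub]
      have hy2 : y = ∑ a ∈ Finset.univ.erase a₀,
          (f (G.head a) - f (G.head a₀)) • G.moveVec a := by
        have hdist : ∑ a ∈ Finset.univ.erase a₀,
            (f (G.head a) - f (G.head a₀)) • G.moveVec a =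
            (∑ a ∈ Finset.univ.erase a₀, f (G.head a) • G.moveVec a) -
            f (G.head a₀) • (∑ a ∈ Finset.univ.erase a₀, G.moveVec a) := by
          rw [Finset.smul_sum, ← Finset.sum_sub_distrib]
          exact Finset.sum_congr rfl fun a _ => by rw [sub_smul]
        rw [hdist, hsumv, Finset.sum_erase_eq_sub (Finset.mem_univ a₀), ← hrepr]
        module
      rw [hy2]
      apply Submodule.sum_mem
      intro a ha
      apply Submodule.smul_mem
      apply Submodule.subset_span
      exact ⟨⟨a, (Finset.mem_erase.mp ha).1⟩, rfl⟩
  -- Part (c)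
  · rw [Finset.sum_erase_eq_sub (Finset.mem_univ a₀), sum_moveVec, zero_sub]
end

section
/- Any two refinements of a decorated Gauss diagram (assignments of integers to the 2n edges whose sum along every distinguished loop equals that loop's valuation, and whose total sum equals the circle's valuation) are connected by a finite sequence of elementary refinement moves of type I (adding a pair of opposite markings, which on the edge-vector level is trivial within one edge) and type II+ (adding the vector x_A for some arrow A). Equivalently: the difference of any two such integer vectors lies in the ℤ-span of {x_A : A an arrow}. -/
private lemma key_span {n : ℕ} [NeZero (2 * n)] (G : GaussDiagram n) (w : ZMod (2 * n) → ℤ)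
    (h1 : ∀ a, ∑ e, G.arcChain a e * w e = 0) (h2 : ∑ e, w e = 0) :
    w ∈ Submodule.span ℤ (Set.range G.moveVec) := by
  have hN : 0 < 2 * n := Nat.pos_of_ne_zero (NeZero.ne _)
  haveI : Fact (1 < 2 * n) := ⟨by omega⟩
  set c : ZMod (2 * n) → ℤ := fun p => -∑ j ∈ Finset.range p.val, w (j : ZMod (2 * n)) with hc
  have hvalcast : ∀ e : ZMod (2 * n), ((e.val : ℕ) : ZMod (2 * n)) = e := by
    intro e; rw [ZMod.natCast_val, ZMod.cast_id]
  -- total sum over a range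
  have htot : ∑ j ∈ Finset.range (2 * n), w (j : ZMod (2 * n)) = 0 := by
    rw [← h2]
    refine Finset.sum_nbij' (fun j => ((j : ℕ) : ZMod (2 * n))) (fun e => e.val)
      ?_ ?_ ?_ ?_ ?_
    · intro a _; exact Finset.mem_univ _
    · intro e _; exact Finset.mem_range.mpr e.val_lt
    · intro a ha; exact ZMod.val_cast_of_lt (Finset.mem_range.mp ha)
    · intro e _; exact hvalcast e
    · intro a _; rfl
  -- the discrete derivative of `c` is `w`
  have hstep : ∀ e : ZMod (2 * n), w e = c e - c (e + 1) := by
    intro e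
    have hev : e.val < 2 * n := e.val_lt
    have hadd : (e + 1).val = (e.val + 1) % (2 * n) := by
      rw [ZMod.val_add, ZMod.val_one]
    rcases Nat.lt_or_ge (e.val + 1) (2 * n) with hlt | hge
    · have h1' : (e + 1).val = e.val + 1 := by rw [hadd, Nat.mod_eq_of_lt hlt]
      simp only [hc, h1', Finset.sum_range_succ, hvalcast e]
      ring
    · have hev1 : e.val = 2 * n - 1 := by omega
      have h2n : e.val + 1 = 2 * n := by omega
      have h1' : (e + 1).val = 0 := by rw [hadd, h2n, Nat.mod_self]
      have hsplit := Finset.sum_range_succ (fun j => w ((j : ℕ) : ZMod (2 * n))) (2 * n - 1)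
      have hs1 : 2 * n - 1 + 1 = 2 * n := by omega
      rw [hs1] at hsplit
      have hcast : (((2 * n - 1 : ℕ) : ZMod (2 * n))) = e := by
        rw [← hev1, hvalcast e]
      rw [htot, hcast] at hsplit
      simp only [hc, h1', hev1, Finset.sum_range_zero]
      omega
  -- telescoping sums
  have htele : ∀ (p : ZMod (2 * n)) (k : ℕ),
      ∑ j ∈ Finset.range k, w (p + (j : ZMod (2 * n))) = c p - c (p + (k : ZMod (2 * n))) := by
    intro p k
    induction k with
    | zero => simp
    | succ k ih =>
        rw [Finset.sum_range_succ, ih, hstep (p + (k : ZMod (2 * n)))]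
        push_cast
        rw [← add_assoc]
        ring
  -- row sums
  have harc : ∀ a, ∑ e, G.arcChain a e * w e = c (G.head a) - c (G.tail a) := by
    intro a
    set h := G.head a
    set t := G.tail a
    set k := (t - h).val with hk
    have hkN : k < 2 * n := ZMod.val_lt _
    have step1 : ∑ e, G.arcChain a e * w e
        = ∑ j ∈ Finset.range k, w (h + (j : ZMod (2 * n))) := by
      simp only [GaussDiagram.arcChain, ite_mul, one_mul, zero_mul]
      rw [← Finset.sum_filter]
      refine Finset.sum_nbij' (fun e => (e - h).val) (fun j => h + (j : ZMod (2 * n)))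
        ?_ ?_ ?_ ?_ ?_
      · intro e he
        exact Finset.mem_range.mpr (Finset.mem_filter.mp he).2
      · intro j hj
        have hjk : j < k := Finset.mem_range.mp hj
        refine Finset.mem_filter.mpr ⟨Finset.mem_univ _, ?_⟩
        show ((h + (j : ZMod (2 * n))) - h).val < k
        rw [add_sub_cancel_left, ZMod.val_cast_of_lt (by omega)]
        exact hjk
      · intro e _
        show h + (((e - h).val : ℕ) : ZMod (2 * n)) = e
        rw [hvalcast (e - h)]
        ring
      · intro j hj
        have hjk : j < k := Finset.mem_range.mp hj
        show ((h + (j : ZMod (2 * n))) - h).val = j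
        rw [add_sub_cancel_left, ZMod.val_cast_of_lt (by omega)]
      · intro e _
        show w e = w (h + (((e - h).val : ℕ) : ZMod (2 * n)))
        rw [hvalcast (e - h)]
        congr 1
        ring
    rw [step1, htele h k, hk, hvalcast (t - h)]
    congr 2
    ring
  have hceq : ∀ a, c (G.head a) = c (G.tail a) := by
    intro a
    have := h1 a
    rw [harc a] at this
    omega
  -- bijectivity of the endpoint map
  have hbij : Function.Bijective (Sum.elim G.head G.tail) := by
    rw [Fintype.bijective_iff_injective_and_card]
    refine ⟨G.inj, ?_⟩
    simp only [Fintype.card_sum, Fintype.card_fin, ZMod.card]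
    omega
  -- key summation identity
  have hA : ∀ q : ZMod (2 * n),
      ∑ a, c (G.head a) * ((if q = G.head a then (1 : ℤ) else 0)
        + (if q = G.tail a then 1 else 0)) = c q := by
    intro q
    set F : ZMod (2 * n) → ℤ := fun p => c p * (if q = p then (1 : ℤ) else 0) with hF
    have hterm : ∀ a : Fin n,
        c (G.head a) * ((if q = G.head a then (1 : ℤ) else 0)
          + (if q = G.tail a then 1 else 0)) = F (G.head a) + F (G.tail a) := by
      intro a
      simp only [hF]
      rw [mul_add]
      congr 1
      rw [hceq a]
    rw [Finset.sum_congr rfl (fun a _ => hterm a), Finset.sum_add_distrib]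
    have hsum : ∑ s : Sum (Fin n) (Fin n), F (Sum.elim G.head G.tail s) = ∑ p, F p :=
      Fintype.sum_bijective _ hbij _ _ (fun s => rfl)
    rw [Fintype.sum_sum_type] at hsum
    simp only [Sum.elim_inl, Sum.elim_inr] at hsum
    rw [hsum]
    simp only [hF, mul_ite, mul_one, mul_zero]
    rw [Finset.sum_ite_eq]
    simp
  -- assemble
  have hw : w = ∑ a, c (G.head a) • G.moveVec a := by
    funext e
    rw [Finset.sum_apply]
    simp only [Pi.smul_apply, smul_eq_mul, GaussDiagram.moveVec, eq_sub_iff_add_eq]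
    have hterm : ∀ a ∈ Finset.univ, c (G.head a) *
        ((if e = G.head a then (1 : ℤ) else 0) + (if e = G.tail a then 1 else 0)
          - (if e + 1 = G.head a then 1 else 0) - (if e + 1 = G.tail a then 1 else 0))
        = c (G.head a) * ((if e = G.head a then (1 : ℤ) else 0)
            + (if e = G.tail a then 1 else 0))
          - c (G.head a) * ((if e + 1 = G.head a then (1 : ℤ) else 0)
            + (if e + 1 = G.tail a then 1 else 0)) := by
      intro a _
      ring
    rw [Finset.sum_congr rfl hterm, Finset.sum_sub_distrib, hA e, hA (e + 1)]
    exact hstep e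
  rw [hw]
  exact Submodule.sum_mem _ fun a _ =>
    Submodule.smul_mem _ _ (Submodule.subset_span ⟨a, rfl⟩)

/-- Any two refinements of a decorated Gauss diagram differ by an element of the `ℤ`-span of the
elementary type II+ move vectors `x_A`: they are connected by finitely many elementary
refinement moves of types I and II+. -/
theorem stmt8 (n : ℕ) [NeZero (2 * n)] (G : GaussDiagram n) (dA : Fin n → ℤ) (d : ℤ)
    (y z : ZMod (2 * n) → ℤ) (hy : G.IsRefinement dA d y) (hz : G.IsRefinement dA d z) :
    y - z ∈ Submodule.span ℤ (Set.range G.moveVec) := by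
  apply key_span
  · intro a
    simp only [Pi.sub_apply, mul_sub]
    rw [Finset.sum_sub_distrib, hy.1 a, hz.1 a, sub_self]
  · simp only [Pi.sub_apply]
    rw [Finset.sum_sub_distrib, hy.2, hz.2, sub_self]
end

section
/- Define a positive T-diagram combinatorially as a cyclic word in arrow-endpoints and positive markings (with each arrow having two endpoints, at least one marking present). Define: an arrow has level 1 if each of its two endpoints is directly preceded (in the cyclic order) by a marking; remove all level-1 arrows and define level k inductively. Then: a positive T-diagram is admissible (every nontrivial loop that respects the circle's orientation, but may traverse arrows in either direction, meets at least one marking) if and only if every arrow has a well-defined level. -/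
/-!
Call a point *preceded* (relative to a set `R` of deleted arrows) when `precededBy` holds there.

If every arrow has a level, let `a` be an arrow of least level `k + 1` among those a loop jumps
along, and `R` the arrows removed after `k` rounds. The loop jumps along `a` from one of its
endpoints `p`, which is preceded. Never jumping twice in a row, it arrived at `p` along a nonempty
arc of the circle starting where its previous jump landed, at an endpoint of an arrow outside `R`;
if the arc carried no marking, `p` would not be preceded.

Conversely, let the removal stop at `R` while some arrow is left. Walking back from a
non-preceded point `q`, let `x` be the first preceded point met; it exists because the point
just after a marking is preceded. The arc from `x` to `q` is unmarked, and `x` is an endpoint of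
a surviving arrow `c`, as otherwise the point after `x` would be preceded too. Since `c`
survives, its other endpoint is not preceded; jumping from it along `c` and following the arc
reaches `q`. As there are finitely many non-preceded points, these walks close up into a reduced
loop meeting no marking.
-/

abbrev Move.NoBacktrack {n : ℕ} (x y : Move n) : Prop := ¬(x.isJump ∧ y.isJump)

theorem exists_transGen_self_of_forall_exists_rel {α : Type*} [Finite α] {r : α → α → Prop}
    {s : Set α} (hs : s.Nonempty) (h : ∀ q ∈ s, ∃ p ∈ s, r p q) :
    ∃ p, Relation.TransGen r p p := by
  by_contra! hirr
  have : IsTrans α (Relation.TransGen r) := ⟨fun _ _ _ => Relation.TransGen.trans⟩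
  have : Std.Irrefl (Relation.TransGen r) := ⟨hirr⟩
  obtain ⟨q, hq, hmin⟩ := (Finite.wellFounded_of_trans_of_irrefl (Relation.TransGen r)).has_min s hs
  obtain ⟨p, hp, hpq⟩ := h q hq
  exact hmin p hp (.single hpq)

namespace GaussDiagram

variable {n : ℕ} {G : GaussDiagram n} {m : ZMod (2 * n) → ℕ}

def IsEndpoint (G : GaussDiagram n) (a : Fin n) (p : ZMod (2 * n)) : Prop :=
  G.head a = p ∨ G.tail a = p

theorem eq_of_isEndpoint {a b : Fin n} {p : ZMod (2 * n)} (ha : G.IsEndpoint a p)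
    (hb : G.IsEndpoint b p) : a = b := by
  rcases ha with ha | ha <;> rcases hb with hb | hb
  · exact Sum.inl_injective (G.inj (a₁ := .inl a) (a₂ := .inl b) (ha.trans hb.symm))
  · cases G.inj (a₁ := .inl a) (a₂ := .inr b) (ha.trans hb.symm)
  · cases G.inj (a₁ := .inr a) (a₂ := .inl b) (ha.trans hb.symm)
  · exact Sum.inr_injective (G.inj (a₁ := .inr a) (a₂ := .inr b) (ha.trans hb.symm))

theorem exists_isEndpoint [NeZero n] (p : ZMod (2 * n)) : ∃ a, G.IsEndpoint a p := by
  have hbij := (Fintype.bijective_iff_injective_and_card (Sum.elim G.head G.tail)).2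
    ⟨G.inj, by simp [ZMod.card]; ring⟩
  obtain ⟨a | a, ha⟩ := hbij.2 p
  exacts [⟨a, .inl ha⟩, ⟨a, .inr ha⟩]

section Walks

variable (G m)

theorem run_append (p : ZMod (2 * n)) (l₁ l₂ : List (Move n)) :
    G.run p (l₁ ++ l₂) = G.run (G.run p l₁) l₂ := by
  induction l₁ generalizing p with
  | nil => rfl
  | cons x xs ih => exact ih (G.target p x)

theorem validFrom_append (p : ZMod (2 * n)) (l₁ l₂ : List (Move n)) :
    G.validFrom p (l₁ ++ l₂) ↔ G.validFrom p l₁ ∧ G.validFrom (G.run p l₁) l₂ := by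
  induction l₁ generalizing p with
  | nil => simp [validFrom, run]
  | cons x xs ih => simp [validFrom, run, ih, and_assoc]

theorem meetsFrom_append (p : ZMod (2 * n)) (l₁ l₂ : List (Move n)) :
    G.meetsFrom m p (l₁ ++ l₂) ↔ G.meetsFrom m p l₁ ∨ G.meetsFrom m (G.run p l₁) l₂ := by
  induction l₁ generalizing p with
  | nil => simp [meetsFrom, run]
  | cons x xs ih => cases x <;> simp [meetsFrom, run, target, ih, or_assoc]

theorem run_replicate_circ (p : ZMod (2 * n)) (k : ℕ) :
    G.run p (List.replicate k .circ) = p + k := by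
  induction k generalizing p with
  | zero => simp [run]
  | succ k ih =>
    rw [List.replicate_succ, run, target, ih]
    push_cast
    ring

theorem validFrom_replicate_circ (p : ZMod (2 * n)) (k : ℕ) :
    G.validFrom p (List.replicate k .circ) := by
  induction k generalizing p with
  | zero => trivial
  | succ k ih => exact ⟨trivial, ih _⟩

theorem meetsFrom_replicate_circ (p : ZMod (2 * n)) (k : ℕ) :
    G.meetsFrom m p (List.replicate k .circ) ↔ ∃ t < k, 0 < m (p + t) := by
  induction k generalizing p with
  | zero => simp [meetsFrom]
  | succ k ih =>
    have hshift (t : ℕ) : p + ((t + 1 : ℕ) : ZMod (2 * n)) = p + 1 + t := by push_cast; ring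
    rw [List.replicate_succ, meetsFrom, ih]
    constructor
    · rintro (h | ⟨t, ht, h⟩)
      · exact ⟨0, k.succ_pos, by simpa using h⟩
      · exact ⟨t + 1, by omega, by rwa [hshift]⟩
    · rintro ⟨_ | t, ht, h⟩
      · exact .inl (by simpa using h)
      · exact .inr ⟨t, by omega, by rwa [hshift] at h⟩

end Walks

theorem precededBy_add_one_iff (R : Set (Fin n)) (q : ZMod (2 * n)) :
    G.precededBy m R (q + 1) ↔
      0 < m q ∨ (∃ a ∈ R, G.IsEndpoint a q) ∧ G.precededBy m R q := by
  have hshift (i : ℕ) : q + 1 - 1 - ((i + 1 : ℕ) : ZMod (2 * n)) = q - 1 - i := by push_cast; ring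
  constructor
  · rintro ⟨_ | j, hj, hcov⟩
    · exact .inl (by simpa using hj)
    · refine .inr ⟨by simpa [IsEndpoint] using hcov 0 j.succ_pos, j, by rwa [← hshift],
        fun i hi => ?_⟩
      simpa only [hshift] using hcov (i + 1) (by omega)
  · rintro (hq | ⟨hqR, j, hj, hcov⟩)
    · exact ⟨0, by simpa using hq⟩
    · refine ⟨j + 1, by rwa [hshift], fun i hi => ?_⟩
      rcases i with _ | i
      · simpa [IsEndpoint] using hqR
      · simpa only [hshift] using hcov i (by omega)

theorem removedAt_mono : Monotone (G.removedAt m) :=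
  monotone_nat_of_le_succ fun _ => Set.subset_union_left

theorem exists_removedAt_succ_eq : ∃ K, G.removedAt m (K + 1) = G.removedAt m K := by
  obtain ⟨K, hK⟩ := WellFoundedGT.monotone_chain_condition ⟨G.removedAt m, removedAt_mono⟩
  exact ⟨K, (hK (K + 1) K.le_succ).symm⟩

theorem exists_isEndpoint_precededBy_of_not_precededBy [NeZero n] {R : Set (Fin n)}
    {q : ZMod (2 * n)} (hq : ¬ G.precededBy m R q) (j : ℕ) (hj : 0 < m (q - 1 - j)) :
    ∃ c ∉ R, ∃ x, G.IsEndpoint c x ∧ G.precededBy m R x ∧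
      ∃ k : ℕ, x + (k + 1 : ℕ) = q ∧ ∀ t ≤ k, m (x + t) = 0 := by
  induction j generalizing q with
  | zero => exact absurd ⟨0, hj, fun i hi => absurd hi i.not_lt_zero⟩ hq
  | succ j ih =>
    obtain ⟨y, rfl⟩ : ∃ y, q = y + 1 := ⟨q - 1, by ring⟩
    rw [precededBy_add_one_iff, not_or, not_and, not_lt, Nat.le_zero] at hq
    obtain ⟨hy, hyR⟩ := hq
    obtain ⟨c, hc⟩ := G.exists_isEndpoint y
    by_cases hprec : G.precededBy m R y
    · exact ⟨c, fun hcR => hyR ⟨c, hcR, hc⟩ hprec, y, hc, hprec, 0, by simp, by simpa using hy⟩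
    obtain ⟨c, hcR, x, hc, hx, k, hxk, hk⟩ :=
      ih hprec (by convert hj using 2; push_cast; ring)
    refine ⟨c, hcR, x, hc, hx, k + 1, by rw [← hxk]; push_cast; ring, fun t ht => ?_⟩
    rcases ht.lt_or_eq with ht | rfl
    · exact hk t (by omega)
    · rwa [hxk]

def UnmarkedWalk (G : GaussDiagram n) (m : ZMod (2 * n) → ℕ) (p q : ZMod (2 * n)) : Prop :=
  ∃ l : List (Move n), G.validFrom p l ∧ G.run p l = q ∧ ¬ G.meetsFrom m p l ∧
    l.IsChain Move.NoBacktrack ∧ l.getLast? = some .circ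

theorem UnmarkedWalk.trans {p q r : ZMod (2 * n)} :
    G.UnmarkedWalk m p q → G.UnmarkedWalk m q r → G.UnmarkedWalk m p r := by
  rintro ⟨l₁, hv₁, rfl, hm₁, hc₁, hl₁⟩ ⟨l₂, hv₂, rfl, hm₂, hc₂, hl₂⟩
  refine ⟨l₁ ++ l₂, (validFrom_append ..).2 ⟨hv₁, hv₂⟩, run_append .., ?_,
    List.isChain_append.2 ⟨hc₁, hc₂, ?_⟩, by rw [List.getLast?_append, hl₂]; rfl⟩
  · rw [meetsFrom_append]
    tauto
  · simp only [hl₁, Option.mem_some_iff]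
    rintro _ rfl _ _ ⟨⟨⟩, _⟩

instance : IsTrans _ (G.UnmarkedWalk m) := ⟨fun _ _ _ => UnmarkedWalk.trans⟩

theorem exists_loop_of_unmarkedWalk {p : ZMod (2 * n)} (h : G.UnmarkedWalk m p p) :
    ∃ L : Loop G, L.Reduced ∧ ¬ L.Meets m := by
  obtain ⟨l, hv, hrun, hnm, hc, hl⟩ := h
  refine ⟨⟨p, l, hv, hrun⟩, ⟨?_, hc, ?_⟩, hnm⟩
  · rintro rfl
    simp at hl
  · simp only [hl, Option.mem_some_iff]
    rintro _ rfl _ _ ⟨⟨⟩, _⟩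

theorem exists_unmarkedWalk_of_not_precededBy [NeZero n] (hm : ∃ e, 0 < m e) {K : ℕ}
    (hK : G.removedAt m (K + 1) = G.removedAt m K) {q : ZMod (2 * n)}
    (hq : ¬ G.precededBy m (G.removedAt m K) q) :
    ∃ p, ¬ G.precededBy m (G.removedAt m K) p ∧ G.UnmarkedWalk m p q := by
  obtain ⟨e, he⟩ := hm
  obtain ⟨c, hcR, x, hc, hx, k, hxq, hk⟩ :=
    exists_isEndpoint_precededBy_of_not_precededBy hq (q - 1 - e).val
      (by rwa [ZMod.natCast_zmod_val, sub_sub_cancel])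
  have hlive : ¬ (G.precededBy m (G.removedAt m K) (G.head c) ∧
      G.precededBy m (G.removedAt m K) (G.tail c)) := fun h => hcR (hK ▸ .inr h)
  obtain ⟨y, mv, hy, hmv, hrun, hnm, hjump⟩ : ∃ y mv, ¬ G.precededBy m (G.removedAt m K) y ∧
      G.validFrom y [mv] ∧ G.run y [mv] = x ∧ ¬ G.meetsFrom m y [mv] ∧ mv.isJump := by
    rcases hc with rfl | rfl
    exacts [⟨G.tail c, .jumpTH c, fun h => hlive ⟨hx, h⟩, ⟨rfl, trivial⟩, rfl, id, trivial⟩,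
      ⟨G.head c, .jumpHT c, fun h => hlive ⟨h, hx⟩, ⟨rfl, trivial⟩, rfl, id, trivial⟩]
  refine ⟨y, hy, [mv] ++ List.replicate (k + 1) .circ,
    (validFrom_append ..).2 ⟨hmv, by rw [hrun]; exact validFrom_replicate_circ ..⟩,
    by rw [run_append, hrun, run_replicate_circ, hxq], ?_, ?_, ?_⟩
  · rw [meetsFrom_append, hrun, meetsFrom_replicate_circ, not_or]
    exact ⟨hnm, fun ⟨t, ht, hpos⟩ => hpos.ne' (hk t (by omega))⟩
  · refine List.isChain_append.2 ⟨List.isChain_singleton _,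
      List.isChain_replicate_of_rel _ fun h => h.1, fun _ _ y hy h => ?_⟩
    simp only [List.head?_replicate, Nat.add_one_ne_zero, if_false, Option.mem_some_iff] at hy
    subst hy
    exact h.2
  · rw [List.replicate_succ', ← List.append_assoc, List.getLast?_concat]

theorem exists_loop_not_meets_of_not_hasLevel (hm : ∃ e, 0 < m e) {a : Fin n}
    (ha : ¬ G.HasLevel m a) : ∃ L : Loop G, L.Reduced ∧ ¬ L.Meets m := by
  have : NeZero n := ⟨a.pos.ne'⟩
  obtain ⟨K, hK⟩ := exists_removedAt_succ_eq (G := G) (m := m)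
  have hQ : {q | ¬ G.precededBy m (G.removedAt m K) q}.Nonempty := by
    have : ¬ (G.precededBy m (G.removedAt m K) (G.head a) ∧
        G.precededBy m (G.removedAt m K) (G.tail a)) := fun h => ha ⟨K + 1, .inr h⟩
    rcases not_and_or.1 this with h | h
    exacts [⟨_, h⟩, ⟨_, h⟩]
  obtain ⟨p, hp⟩ := exists_transGen_self_of_forall_exists_rel hQ
    fun q hq => exists_unmarkedWalk_of_not_precededBy hm hK hq
  rw [Relation.transGen_eq_self] at hp
  exact exists_loop_of_unmarkedWalk hp

def JumpsAlong (l : List (Move n)) (a : Fin n) : Prop :=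
  Move.jumpHT a ∈ l ∨ Move.jumpTH a ∈ l

theorem not_precededBy_run {R : Set (Fin n)} {p : ZMod (2 * n)} {u : List (Move n)}
    (hv : G.validFrom p u) (hnm : ¬ G.meetsFrom m p u) (hjump : ∃ x ∈ u, x.isJump)
    (hR : ∀ a, JumpsAlong u a → a ∉ R) (hlast : u.getLast? = some .circ) :
    ¬ G.precededBy m R (G.run p u) := by
  induction u using List.reverseRecOn with
  | nil => simp at hlast
  | append_singleton u x ih =>
    rw [List.getLast?_concat, Option.some_inj] at hlast
    subst hlast
    have hjump' : ∃ x ∈ u, x.isJump := by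
      obtain ⟨x, hx, hxj⟩ := hjump
      rcases List.mem_append.1 hx with hx | hx
      · exact ⟨x, hx, hxj⟩
      · obtain rfl := List.mem_singleton.1 hx
        exact hxj.elim
    rw [validFrom_append] at hv
    rw [meetsFrom_append, not_or] at hnm
    rw [run_append, show G.run (G.run p u) [.circ] = G.run p u + 1 from rfl,
      precededBy_add_one_iff]
    rintro (hpos | ⟨⟨b, hbR, hb⟩, hprec⟩)
    · exact hnm.2 (.inl hpos)
    obtain rfl | ⟨u, y, rfl⟩ := List.eq_nil_or_concat' u
    · simp at hjump'
    cases y with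
    | circ =>
      refine ih hv.1 hnm.1 hjump' (fun a ha => hR a ?_) List.getLast?_concat hprec
      exact Or.imp (List.mem_append_left _) (List.mem_append_left _) ha
    | jumpHT c =>
      have hc : G.IsEndpoint c (G.run p (u ++ [.jumpHT c])) := by rw [run_append]; exact .inr rfl
      exact hR c (by simp [JumpsAlong]) (eq_of_isEndpoint hb hc ▸ hbR)
    | jumpTH c =>
      have hc : G.IsEndpoint c (G.run p (u ++ [.jumpTH c])) := by rw [run_append]; exact .inl rfl
      exact hR c (by simp [JumpsAlong]) (eq_of_isEndpoint hb hc ▸ hbR)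

/-- Running twice around the loop, the jump `mv` of the second round is reached along the
circle from the landing point of an earlier jump. -/
theorem Loop.not_precededBy_run_of_jump {L : Loop G} (hr : L.Reduced) (hM : ¬ L.Meets m)
    {R : Set (Fin n)} (hR : ∀ a, JumpsAlong L.moves a → a ∉ R) {s t : List (Move n)}
    {mv : Move n} (hst : L.moves = s ++ mv :: t) (hmv : mv.isJump) :
    ¬ G.precededBy m R (G.run L.start s) := by
  have hsub : ∀ x ∈ L.moves ++ s, x ∈ L.moves := by
    intro x hx
    rcases List.mem_append.1 hx with hx | hx
    · exact hx
    · rw [hst]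
      exact List.mem_append_left _ hx
  have hdouble : L.moves ++ L.moves = (L.moves ++ s) ++ mv :: t := by
    rw [List.append_assoc, ← hst]
  have hv : G.validFrom L.start (L.moves ++ L.moves) :=
    (validFrom_append ..).2 ⟨L.valid, by rw [L.closed]; exact L.valid⟩
  have hnm : ¬ G.meetsFrom m L.start (L.moves ++ L.moves) := by
    rw [meetsFrom_append, L.closed, or_self]
    exact hM
  have hc : (L.moves ++ L.moves).IsChain Move.NoBacktrack :=
    List.isChain_append.2 ⟨hr.2.1, hr.2.1, hr.2.2⟩
  rw [hdouble, validFrom_append] at hv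
  rw [hdouble, meetsFrom_append, not_or] at hnm
  rw [hdouble] at hc
  have hlast : (L.moves ++ s).getLast? = some .circ := by
    obtain ⟨x, hx⟩ : ∃ x, (L.moves ++ s).getLast? = some x := Option.ne_none_iff_exists'.1 <| by
      rw [Ne, List.getLast?_eq_none_iff, List.append_eq_nil_iff, not_and_or]
      exact .inl hr.1
    cases x with
    | circ => exact hx
    | _ => exact absurd ⟨trivial, hmv⟩ ((List.isChain_append.1 hc).2.2 _ hx mv rfl)
  have hrun : G.run L.start (L.moves ++ s) = G.run L.start s := by rw [run_append, L.closed]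
  refine hrun ▸ not_precededBy_run hv.1 hnm.1 ⟨mv, ?_, hmv⟩
    (fun b hb => hR b (Or.imp (hsub _) (hsub _) hb)) hlast
  rw [hst]
  simp

theorem exists_precededBy_of_forall_hasLevel (hlev : ∀ a, G.HasLevel m a) {U : Set (Fin n)}
    (hU : U.Nonempty) : ∃ R, (∀ b ∈ U, b ∉ R) ∧
      ∃ a ∈ U, G.precededBy m R (G.head a) ∧ G.precededBy m R (G.tail a) := by
  classical
  have hex : ∃ k, ∃ a ∈ U, a ∈ G.removedAt m k :=
    let ⟨a, ha⟩ := hU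
    let ⟨k, hk⟩ := hlev a
    ⟨k, a, ha, hk⟩
  obtain ⟨a, haU, ha⟩ := Nat.find_spec hex
  rcases h : Nat.find hex with _ | k
  · rw [h] at ha
    exact absurd ha id
  · rw [h] at ha
    have hk : ∀ b ∈ U, b ∉ G.removedAt m k := fun b hb hbk =>
      Nat.find_min hex (h ▸ k.lt_succ_self) ⟨b, hb, hbk⟩
    exact ⟨G.removedAt m k, hk, a, haU, ha.resolve_left (hk a haU)⟩

theorem Loop.meets_of_forall_eq_circ (hm : ∃ e, 0 < m e) (L : Loop G) (hne : L.moves ≠ [])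
    (hcirc : ∀ x ∈ L.moves, x = .circ) : L.Meets m := by
  obtain ⟨e, he⟩ := hm
  have hrepl := List.eq_replicate_of_mem hcirc
  have hdvd : 2 * n ∣ L.moves.length := by
    have := L.closed
    rwa [hrepl, run_replicate_circ, add_eq_left, ZMod.natCast_eq_zero_iff] at this
  have hlen : 0 < L.moves.length := List.length_pos_iff.2 hne
  have : NeZero n := ⟨by rintro rfl; rw [mul_zero, zero_dvd_iff] at hdvd; omega⟩
  rw [Loop.Meets, hrepl, meetsFrom_replicate_circ]
  exact ⟨(e - L.start).val, (ZMod.val_lt _).trans_le (Nat.le_of_dvd hlen hdvd),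
    by rwa [ZMod.natCast_zmod_val, add_sub_cancel]⟩

theorem Loop.meets_of_forall_hasLevel (hm : ∃ e, 0 < m e) (hlev : ∀ a, G.HasLevel m a)
    (L : Loop G) (hr : L.Reduced) : L.Meets m := by
  by_cases hcirc : ∀ x ∈ L.moves, x = .circ
  · exact L.meets_of_forall_eq_circ hm hr.1 hcirc
  by_contra hM
  push Not at hcirc
  obtain ⟨R, hUR, a, haU, hhead, htail⟩ :=
    exists_precededBy_of_forall_hasLevel hlev (U := {a | JumpsAlong L.moves a}) <| by
      obtain ⟨_ | a | a, hx, hxc⟩ := hcirc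
      exacts [absurd rfl hxc, ⟨a, .inl hx⟩, ⟨a, .inr hx⟩]
  obtain ⟨mv, hmv, hmva⟩ : ∃ mv ∈ L.moves, mv = .jumpHT a ∨ mv = .jumpTH a := by
    rcases haU with h | h
    exacts [⟨_, h, .inl rfl⟩, ⟨_, h, .inr rfl⟩]
  obtain ⟨s, t, hst⟩ := List.append_of_mem hmv
  have hstart : G.validFrom (G.run L.start s) (mv :: t) := by
    have := L.valid
    rw [hst, validFrom_append] at this
    exact this.2
  refine L.not_precededBy_run_of_jump hr hM hUR hst (by rcases hmva with rfl | rfl <;> trivial) ?_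
  rcases hmva with rfl | rfl
  · rwa [hstart.1]
  · rwa [hstart.1]

end GaussDiagram

/-- A positive T-diagram (all markings positive, at least one marking) is admissible — every
nontrivial orientation-respecting loop meets at least one marking — if and only if every arrow
has a well-defined level. -/
theorem stmt10 (n : ℕ) (G : GaussDiagram n) (m : ZMod (2 * n) → ℕ) (hm : ∃ e, 0 < m e) :
    (∀ L : GaussDiagram.Loop G, L.Reduced → L.Meets m) ↔ ∀ a, G.HasLevel m a := by
  refine ⟨fun hadm a => ?_, fun hlev L hr => L.meets_of_forall_hasLevel hm hlev hr⟩
  by_contra ha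
  obtain ⟨L, hr, hnm⟩ := GaussDiagram.exists_loop_not_meets_of_not_hasLevel hm ha
  exact hnm (hadm L hr)
end

section
/- In a positive T-diagram, if some arrow has no well-defined level, then there exists a nontrivial orientation-respecting loop avoiding all markings; concretely, after removing all arrows with a level, the remaining nonempty set of arrows admits a closed path, obtained by repeatedly traversing an arrow and then moving forward along the circle through unmarked arcs to the next arrow endpoint, which closes up by finiteness and avoids every marking. -/
section Aux

open GaussDiagram List

variable {n : ℕ} (G : GaussDiagram n) (m : ZMod (2 * n) → ℕ)

/-- No-two-consecutive-jumps relation. -/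
def NoJJ {n : ℕ} (m₁ m₂ : Move n) : Prop := ¬(m₁.isJump ∧ m₂.isJump)

lemma getLast?_cons' {α : Type*} {l : List α} (h : l ≠ []) (a : α) :
    (a :: l).getLast? = l.getLast? := by
  cases l with
  | nil => exact absurd rfl h
  | cons b t => rw [List.getLast?_cons_cons]

lemma noJJ_circ_left (m₂ : Move n) : NoJJ Move.circ m₂ := by
  simp [NoJJ, Move.isJump]

lemma noJJ_circ_right (m₁ : Move n) : NoJJ m₁ Move.circ := by
  simp [NoJJ, Move.isJump]

/-- A good segment: nonempty, ends with a circle move, no two consecutive jumps. -/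
def GoodSeg {n : ℕ} (ms : List (Move n)) : Prop :=
  ms ≠ [] ∧ ms.getLast? = some Move.circ ∧ ms.Chain' NoJJ

lemma goodSeg_replicate {c : ℕ} (hc : 0 < c) :
    GoodSeg (List.replicate c (Move.circ : Move n)) := by
  induction c with
  | zero => omega
  | succ c ih =>
    rcases Nat.eq_zero_or_pos c with rfl | hc'
    · refine ⟨by simp, by simp, List.isChain_singleton _⟩
    · obtain ⟨h1, h2, h3⟩ := ih hc'
      refine ⟨by simp, ?_, ?_⟩
      · rw [List.replicate_succ, getLast?_cons' h1]; exact h2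
      · rw [List.replicate_succ]; refine List.isChain_cons.mpr ?_
        exact ⟨fun y _ => noJJ_circ_left y, h3⟩

lemma goodSeg_cons {mv : Move n} {ms : List (Move n)} (h : GoodSeg ms)
    (hh : ms.head? = some Move.circ) : GoodSeg (mv :: ms) := by
  obtain ⟨h1, h2, h3⟩ := h
  refine ⟨by simp, by rw [getLast?_cons' h1]; exact h2, ?_⟩
  refine List.isChain_cons.mpr ?_
  refine ⟨fun y hy => ?_, h3⟩
  rw [hh] at hy
  obtain rfl : y = Move.circ := by simpa using hy.symm
  exact noJJ_circ_right mv

lemma goodSeg_append {s t : List (Move n)} (h1 : GoodSeg s) (h2 : t = [] ∨ GoodSeg t) :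
    GoodSeg (s ++ t) := by
  rcases h2 with rfl | h2
  · simpa using h1
  refine ⟨by simp [h1.1], ?_, ?_⟩
  · rw [List.getLast?_append_of_ne_nil _ h2.1]; exact h2.2.1
  · refine List.isChain_append.mpr ⟨h1.2.2, h2.2.2, fun x hx y _ => ?_⟩
    rw [h1.2.1] at hx
    obtain rfl : x = Move.circ := by simpa using hx.symm
    exact noJJ_circ_left y

lemma run_append (s t : List (Move n)) (p : ZMod (2 * n)) :
    G.run p (s ++ t) = G.run (G.run p s) t := by
  induction s generalizing p with
  | nil => simp [GaussDiagram.run]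
  | cons mv r ih => simp [GaussDiagram.run, ih]

lemma validFrom_append (s t : List (Move n)) (p : ZMod (2 * n)) :
    G.validFrom p (s ++ t) ↔ G.validFrom p s ∧ G.validFrom (G.run p s) t := by
  induction s generalizing p with
  | nil => simp [GaussDiagram.validFrom, GaussDiagram.run]
  | cons mv r ih => simp [GaussDiagram.validFrom, GaussDiagram.run, ih, and_assoc]

lemma meetsFrom_append (s t : List (Move n)) (p : ZMod (2 * n)) :
    G.meetsFrom m p (s ++ t) ↔ G.meetsFrom m p s ∨ G.meetsFrom m (G.run p s) t := by
  induction s generalizing p with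
  | nil => simp [GaussDiagram.meetsFrom, GaussDiagram.run]
  | cons mv r ih =>
    cases mv <;>
      simp [GaussDiagram.meetsFrom, GaussDiagram.run, GaussDiagram.target, ih, or_assoc]

lemma validFrom_replicate (c : ℕ) (p : ZMod (2 * n)) :
    G.validFrom p (List.replicate c Move.circ) := by
  induction c generalizing p with
  | zero => trivial
  | succ c ih => exact ⟨trivial, ih _⟩

lemma run_replicate (c : ℕ) (p : ZMod (2 * n)) :
    G.run p (List.replicate c Move.circ) = p + (c : ZMod (2 * n)) := by
  induction c generalizing p with
  | zero => simp [GaussDiagram.run]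
  | succ c ih =>
    rw [List.replicate_succ]
    show G.run (G.target p Move.circ) _ = _
    rw [ih]
    show p + 1 + _ = _
    push_cast
    ring

lemma not_meetsFrom_replicate {c : ℕ} {p : ZMod (2 * n)}
    (h : ∀ t < c, ¬ 0 < m (p + (t : ZMod (2 * n)))) :
    ¬ G.meetsFrom m p (List.replicate c Move.circ) := by
  induction c generalizing p with
  | zero => simp [GaussDiagram.meetsFrom]
  | succ c ih =>
    rw [List.replicate_succ]
    show ¬ (0 < m p ∨ G.meetsFrom m (p + 1) _)
    push_neg
    refine ⟨by simpa using h 0 (by omega), ih ?_⟩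
    intro t ht
    have := h (t + 1) (by omega)
    convert this using 3
    push_cast
    ring

lemma removedAt_mono {k l : ℕ} (h : k ≤ l) : G.removedAt m k ⊆ G.removedAt m l := by
  induction h with
  | refl => exact subset_rfl
  | step _ ih =>
    refine ih.trans ?_
    rw [GaussDiagram.removedAt]
    exact Set.subset_union_left

lemma precededBy_mono {R R' : Set (Fin n)} (h : R ⊆ R') {p : ZMod (2 * n)}
    (hp : G.precededBy m R p) : G.precededBy m R' p := by
  obtain ⟨j, hj, hall⟩ := hp
  exact ⟨j, hj, fun i hi => by obtain ⟨a, ha, h'⟩ := hall i hi; exact ⟨a, h ha, h'⟩⟩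

lemma precededBy_lift {p : ZMod (2 * n)}
    (h : G.precededBy m {a | G.HasLevel m a} p) :
    ∃ K, G.precededBy m (G.removedAt m K) p := by
  obtain ⟨j, hj, hall⟩ := h
  suffices h2 : ∃ K, ∀ i < j, ∃ a ∈ G.removedAt m K,
      G.head a = p - 1 - (i : ZMod (2 * n)) ∨ G.tail a = p - 1 - (i : ZMod (2 * n)) by
    obtain ⟨K, hK⟩ := h2
    exact ⟨K, j, hj, hK⟩
  have key : ∀ J, J ≤ j → ∃ K, ∀ i < J, ∃ a ∈ G.removedAt m K,
      G.head a = p - 1 - (i : ZMod (2 * n)) ∨ G.tail a = p - 1 - (i : ZMod (2 * n)) := by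
    intro J hJ
    induction J with
    | zero => exact ⟨0, fun i hi => absurd hi (Nat.not_lt_zero i)⟩
    | succ J ih =>
      obtain ⟨K, hK⟩ := ih (by omega)
      obtain ⟨a, ha, hpa⟩ := hall J (by omega)
      obtain ⟨k, hk⟩ := ha
      refine ⟨max K k, fun i hi => ?_⟩
      rcases Nat.lt_succ_iff_lt_or_eq.mp hi with h' | rfl
      · obtain ⟨b, hb, hpb⟩ := hK i h'
        exact ⟨b, removedAt_mono G m (le_max_left K k) hb, hpb⟩
      · exact ⟨a, removedAt_mono G m (le_max_right K k) hk, hpa⟩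
  exact key j le_rfl

lemma notBoth {a : Fin n} (ha : ¬ G.HasLevel m a) :
    ¬ (G.precededBy m {a | G.HasLevel m a} (G.head a) ∧
       G.precededBy m {a | G.HasLevel m a} (G.tail a)) := by
  rintro ⟨hh, ht⟩
  obtain ⟨K₁, h₁⟩ := precededBy_lift G m hh
  obtain ⟨K₂, h₂⟩ := precededBy_lift G m ht
  refine ha ⟨max K₁ K₂ + 1, ?_⟩
  rw [GaussDiagram.removedAt]
  exact Or.inr ⟨precededBy_mono G m (removedAt_mono G m (le_max_left K₁ K₂)) h₁,
    precededBy_mono G m (removedAt_mono G m (le_max_right K₁ K₂)) h₂⟩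

lemma exists_endpoint (hn : 0 < n) (p : ZMod (2 * n)) :
    ∃ b, G.head b = p ∨ G.tail b = p := by
  haveI : NeZero (2 * n) := ⟨by omega⟩
  have hb : Function.Bijective (Sum.elim G.head G.tail) :=
    (Fintype.bijective_iff_injective_and_card _).mpr ⟨G.inj, by simp [ZMod.card, two_mul]⟩
  obtain ⟨x, hx⟩ := hb.2 p
  cases x with
  | inl a => exact ⟨a, Or.inl hx⟩
  | inr a => exact ⟨a, Or.inr hx⟩

/-- A "bad" point: an endpoint of a surviving arrow which is not directly preceded by a
marking (relative to the set of arrows having a level). -/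
def Bad (p : ZMod (2 * n)) : Prop :=
  (∃ b, ¬ G.HasLevel m b ∧ (G.head b = p ∨ G.tail b = p)) ∧
    ¬ G.precededBy m {a | G.HasLevel m a} p

lemma step (hn : 0 < n) (hmm : ∃ e, 0 < m e) {p : ZMod (2 * n)} (hp : Bad G m p) :
    ∃ q, Bad G m q ∧ ∃ ms, G.validFrom q ms ∧ G.run q ms = p ∧
      ¬ G.meetsFrom m q ms ∧ GoodSeg ms := by
  classical
  haveI : NeZero (2 * n) := ⟨by omega⟩
  have hex : ∃ j : ℕ, 0 < m (p - 1 - (j : ZMod (2 * n))) := by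
    obtain ⟨e, he⟩ := hmm
    refine ⟨(p - 1 - e).val, ?_⟩
    rwa [ZMod.natCast_val, ZMod.cast_id, sub_sub_cancel]
  set j := Nat.find hex with hjdef
  have hj : 0 < m (p - 1 - (j : ZMod (2 * n))) := Nat.find_spec hex
  have hmin : ∀ i < j, ¬ 0 < m (p - 1 - (i : ZMod (2 * n))) := fun i hi => Nat.find_min hex hi
  have hnp := hp.2
  rw [GaussDiagram.precededBy] at hnp
  push_neg at hnp
  obtain ⟨i, hij, hiS⟩ := hnp j hj
  -- the walk from q := p - 1 - i to p
  have harith : (p - 1 - (i : ZMod (2 * n))) + ((i + 1 : ℕ) : ZMod (2 * n)) = p := by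
    push_cast; ring
  have hrun : G.run (p - 1 - (i : ZMod (2 * n))) (List.replicate (i + 1) Move.circ) = p := by
    rw [run_replicate, harith]
  have hmeet : ¬ G.meetsFrom m (p - 1 - (i : ZMod (2 * n))) (List.replicate (i + 1) Move.circ) := by
    refine not_meetsFrom_replicate G m ?_
    intro t ht
    have htle : t ≤ i := by omega
    have : (p - 1 - (i : ZMod (2 * n))) + (t : ZMod (2 * n))
        = p - 1 - ((i - t : ℕ) : ZMod (2 * n)) := by
      rw [Nat.cast_sub htle]; ring
    rw [this]
    exact hmin (i - t) (by omega)
  have hvalid := validFrom_replicate G (i + 1) (p - 1 - (i : ZMod (2 * n)))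
  have hgood : GoodSeg (List.replicate (i + 1) (Move.circ : Move n)) :=
    goodSeg_replicate (by omega)
  obtain ⟨b, hb⟩ := exists_endpoint G hn (p - 1 - (i : ZMod (2 * n)))
  have hbS : ¬ G.HasLevel m b := fun hlev => by
    rcases hb with h' | h'
    exacts [(hiS b hlev).1 h', (hiS b hlev).2 h']
  by_cases hq : G.precededBy m {a | G.HasLevel m a} (p - 1 - (i : ZMod (2 * n)))
  · -- q is preceded by a marking; jump along b from its other endpoint
    have hnb := notBoth G m hbS
    rcases hb with hbh | hbt
    · -- head b = q, so tail b is bad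
      have hbad : ¬ G.precededBy m {a | G.HasLevel m a} (G.tail b) := by
        intro h'; exact hnb ⟨by rwa [hbh], h'⟩
      refine ⟨G.tail b, ⟨⟨b, hbS, Or.inr rfl⟩, hbad⟩,
        Move.jumpTH b :: List.replicate (i + 1) Move.circ, ⟨rfl, ?_⟩, ?_, ?_, ?_⟩
      · show G.validFrom (G.target (G.tail b) (Move.jumpTH b)) _
        simpa [GaussDiagram.target, hbh] using hvalid
      · show G.run (G.target (G.tail b) (Move.jumpTH b)) _ = p
        simpa [GaussDiagram.target, hbh] using hrun
      · show ¬ G.meetsFrom m (G.head b) _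
        rwa [hbh]
      · exact goodSeg_cons hgood (by rw [List.replicate_succ]; rfl)
    · -- tail b = q, so head b is bad
      have hbad : ¬ G.precededBy m {a | G.HasLevel m a} (G.head b) := by
        intro h'; exact hnb ⟨h', by rwa [hbt]⟩
      refine ⟨G.head b, ⟨⟨b, hbS, Or.inl rfl⟩, hbad⟩,
        Move.jumpHT b :: List.replicate (i + 1) Move.circ, ⟨rfl, ?_⟩, ?_, ?_, ?_⟩
      · show G.validFrom (G.target (G.head b) (Move.jumpHT b)) _
        simpa [GaussDiagram.target, hbt] using hvalid
      · show G.run (G.target (G.head b) (Move.jumpHT b)) _ = p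
        simpa [GaussDiagram.target, hbt] using hrun
      · show ¬ G.meetsFrom m (G.tail b) _
        rwa [hbt]
      · exact goodSeg_cons hgood (by rw [List.replicate_succ]; rfl)
  · -- q itself is bad
    exact ⟨p - 1 - (i : ZMod (2 * n)), ⟨⟨b, hbS, hb⟩, hq⟩,
      List.replicate (i + 1) Move.circ, hvalid, hrun, hmeet, hgood⟩

end Aux

/-- In a positive T-diagram, if some arrow has no well-defined level then there is a nontrivial
orientation-respecting loop avoiding all markings. -/
theorem stmt12 (n : ℕ) (G : GaussDiagram n) (m : ZMod (2 * n) → ℕ) (hm : ∃ e, 0 < m e)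
    (h : ∃ a, ¬G.HasLevel m a) :
    ∃ L : GaussDiagram.Loop G, L.Reduced ∧ ¬L.Meets m := by
  classical
  obtain ⟨a₀, ha₀⟩ := h
  have hn : 0 < n := a₀.pos
  haveI : NeZero (2 * n) := ⟨by omega⟩
  have hbad : ∃ p, Bad G m p := by
    rcases not_and_or.mp (notBoth G m ha₀) with h' | h'
    · exact ⟨G.head a₀, ⟨a₀, ha₀, Or.inl rfl⟩, h'⟩
    · exact ⟨G.tail a₀, ⟨a₀, ha₀, Or.inr rfl⟩, h'⟩
  obtain ⟨p₀, hp₀⟩ := hbad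
  have hstep : ∀ x : {p : ZMod (2 * n) // Bad G m p}, ∃ q, Bad G m q ∧
      ∃ ms, G.validFrom q ms ∧ G.run q ms = x.1 ∧ ¬ G.meetsFrom m q ms ∧ GoodSeg ms :=
    fun x => step G m hn hm x.2
  choose nxtp hbadq ms hv hr hme hg using hstep
  let f : {p : ZMod (2 * n) // Bad G m p} → {p : ZMod (2 * n) // Bad G m p} :=
    fun x => ⟨nxtp x, hbadq x⟩
  have hf1 : ∀ x, (f x).1 = nxtp x := fun _ => rfl
  obtain ⟨k, l, hkl, hke⟩ := Finite.exists_ne_map_eq_of_infinite (fun k : ℕ => f^[k] ⟨p₀, hp₀⟩)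
  obtain ⟨k, l, hlt, hke⟩ : ∃ k l, k < l ∧ f^[k] ⟨p₀, hp₀⟩ = f^[l] ⟨p₀, hp₀⟩ := by
    rcases hkl.lt_or_gt with h' | h'
    exacts [⟨k, l, h', hke⟩, ⟨l, k, h', hke.symm⟩]
  set y := f^[k] ⟨p₀, hp₀⟩ with hy
  set d := l - k with hd
  have hdy : f^[d] y = y := by
    rw [hy, ← Function.iterate_add_apply]
    have hdk : d + k = l := by omega
    rw [hdk, ← hke]
  have hd1 : 0 < d := by omega
  let M : ℕ → List (Move n) := fun j => Nat.rec [] (fun j acc => ms (f^[j] y) ++ acc) j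
  have hM0 : M 0 = [] := rfl
  have hMs : ∀ j, M (j + 1) = ms (f^[j] y) ++ M j := fun _ => rfl
  have key : ∀ j, G.validFrom (f^[j] y).1 (M j) ∧ G.run (f^[j] y).1 (M j) = y.1 ∧
      ¬ G.meetsFrom m (f^[j] y).1 (M j) ∧ (0 < j → GoodSeg (M j)) := by
    intro j
    induction j with
    | zero =>
      exact ⟨trivial, rfl, by rw [hM0]; simp [GaussDiagram.meetsFrom],
        fun h' => absurd h' (lt_irrefl 0)⟩
    | succ j ih =>
      have hfx : f^[j + 1] y = f (f^[j] y) := Function.iterate_succ_apply' f j y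
      have h1 : (f^[j + 1] y).1 = nxtp (f^[j] y) := by rw [hfx, hf1]
      refine ⟨?_, ?_, ?_, ?_⟩
      · rw [hMs, validFrom_append, h1]
        exact ⟨hv _, by rw [hr]; exact ih.1⟩
      · rw [hMs, run_append, h1, hr]
        exact ih.2.1
      · rw [hMs, meetsFrom_append, h1, hr]
        push_neg
        exact ⟨hme _, ih.2.2.1⟩
      · intro _
        rw [hMs]
        refine goodSeg_append (hg _) ?_
        rcases Nat.eq_zero_or_pos j with rfl | hj
        · exact Or.inl hM0
        · exact Or.inr (ih.2.2.2 hj)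
  have hkey := key d
  rw [hdy] at hkey
  obtain ⟨hval, hclosed, hnm, hgood⟩ := hkey
  have hG := hgood hd1
  refine ⟨⟨y.1, M d, hval, hclosed⟩, ⟨hG.1, hG.2.2, ?_⟩, hnm⟩
  intro m₁ h₁ m₂ _
  rw [hG.2.1] at h₁
  obtain rfl : m₁ = Move.circ := by simpa using h₁.symm
  simp [Move.isJump]
end
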